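/- arXiv:2501.08439 — 6 statements merged into one kernel-verified Lean document; each statement's English description precedes it below -/
import Mathlib

section
/- Let n ≥ 2 and let 0 ≤ p_1 < p_2 < ⋯ < p_n ≤ 1 be real numbers, and for each i define d_i(x,y) = |x − p_i| + |y − p_i|. For every k ∈ {1, …, n−1}, if p_k ≤ x ≤ p_{k+1} and 0 ≤ y ≤ p_k + p_{k+1} − x, then d_k(x,y) = min_{1 ≤ i ≤ n} d_i(x,y). -/
theorem stmt_4 (n : ℕ) (hn : 2 ≤ n) (p : ℕ → ℝ)
    (hp0 : 0 ≤ p 1) (hp1 : p n ≤ 1)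
    (hmono : ∀ i j, 1 ≤ i → i < j → j ≤ n → p i < p j)
    (k : ℕ) (hk1 : 1 ≤ k) (hkn : k ≤ n - 1)
    (x y : ℝ) (hxl : p k ≤ x) (hxu : x ≤ p (k + 1))
    (hy0 : 0 ≤ y) (hyu : y ≤ p k + p (k + 1) - x) :
    |x - p k| + |y - p k|
      = (Finset.Icc 1 n).inf' (Finset.nonempty_Icc.mpr (le_trans one_le_two hn))
          (fun i => |x - p i| + |y - p i|) := by
  have hk1n : k + 1 ≤ n := by omega
  refine le_antisymm ?_ (Finset.inf'_le _ (Finset.mem_Icc.mpr ⟨hk1, by omega⟩))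
  apply Finset.le_inf'
  intro i hi
  obtain ⟨hi1, hin⟩ := Finset.mem_Icc.mp hi
  rcases le_or_gt i k with h | h
  · have hpi : p i ≤ p k := by
      rcases eq_or_lt_of_le h with rfl | h
      · exact le_rfl
      · exact (hmono i k hi1 h (by omega)).le
    have h1 : |x - p k| = x - p k := abs_of_nonneg (by linarith)
    have h2 : |x - p i| = x - p i := abs_of_nonneg (by linarith)
    have h3 := abs_sub_abs_le_abs_sub (y - p k) (y - p i)
    have h4 : |y - p k - (y - p i)| = p k - p i := by
      rw [show y - p k - (y - p i) = -(p k - p i) by ring, abs_neg]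
      exact abs_of_nonneg (by linarith)
    rw [h4] at h3
    linarith
  · have hpi : p (k + 1) ≤ p i := by
      rcases eq_or_lt_of_le (by omega : k + 1 ≤ i) with rfl | h
      · exact le_rfl
      · exact (hmono (k + 1) i (by omega) h hin).le
    have h1 : |x - p k| = x - p k := abs_of_nonneg (by linarith)
    have h2 : |x - p i| = p i - x := by
      rw [abs_sub_comm]; exact abs_of_nonneg (by linarith)
    have h3 : |y - p i| = p i - y := by
      rw [abs_sub_comm]; exact abs_of_nonneg (by linarith)
    rcases abs_cases (y - p k) with ⟨h4, _⟩ | ⟨h4, _⟩ <;> rw [h4] <;> linarith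
end

section
/- Let n ≥ 2 and let 0 ≤ p_1 < p_2 < ⋯ < p_n ≤ 1 be real numbers, and for each i define d_i(x,y) = |x − p_i| + |y − p_i|. For every k ∈ {1, …, n−1}, if p_k ≤ x ≤ p_{k+1} and p_k + p_{k+1} − x ≤ y ≤ 1, then d_{k+1}(x,y) = min_{1 ≤ i ≤ n} d_i(x,y). -/
theorem stmt_5 (n : ℕ) (hn : 2 ≤ n) (p : ℕ → ℝ)
    (hp0 : 0 ≤ p 1) (hp1 : p n ≤ 1)
    (hmono : ∀ i j, 1 ≤ i → i < j → j ≤ n → p i < p j)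
    (k : ℕ) (hk1 : 1 ≤ k) (hkn : k ≤ n - 1)
    (x y : ℝ) (hxl : p k ≤ x) (hxu : x ≤ p (k + 1))
    (hyl : p k + p (k + 1) - x ≤ y) (hy1 : y ≤ 1) :
    |x - p (k + 1)| + |y - p (k + 1)|
      = (Finset.Icc 1 n).inf' (Finset.nonempty_Icc.mpr (le_trans one_le_two hn))
          (fun i => |x - p i| + |y - p i|) := by
  have hkn' : k + 1 ≤ n := by omega
  have hmem : k + 1 ∈ Finset.Icc 1 n := Finset.mem_Icc.mpr ⟨by omega, hkn'⟩
  have hpk1 : p k < p (k + 1) := hmono k (k + 1) hk1 (by omega) hkn'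
  apply le_antisymm
  · apply Finset.le_inf'
    intro i hi
    obtain ⟨hi1, hin⟩ := Finset.mem_Icc.mp hi
    rcases le_or_gt i k with h | h
    · have hpi : p i ≤ p k := by
        rcases eq_or_lt_of_le h with h' | h'
        · rw [h']
        · exact (hmono i k hi1 h' (by omega)).le
      rcases abs_cases (x - p (k + 1)) with ⟨e1, _⟩ | ⟨e1, _⟩ <;>
      rcases abs_cases (y - p (k + 1)) with ⟨e2, _⟩ | ⟨e2, _⟩ <;>
      rcases abs_cases (x - p i) with ⟨e3, h3⟩ | ⟨e3, h3⟩ <;>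
      rcases abs_cases (y - p i) with ⟨e4, h4⟩ | ⟨e4, h4⟩ <;>
      linarith
    · have hpi : p (k + 1) ≤ p i := by
        rcases eq_or_lt_of_le (by omega : k + 1 ≤ i) with h' | h'
        · rw [h']
        · exact (hmono (k + 1) i (by omega) h' hin).le
      rcases abs_cases (x - p (k + 1)) with ⟨e1, _⟩ | ⟨e1, _⟩ <;>
      rcases abs_cases (y - p (k + 1)) with ⟨e2, _⟩ | ⟨e2, _⟩ <;>
      rcases abs_cases (x - p i) with ⟨e3, h3⟩ | ⟨e3, h3⟩ <;>
      rcases abs_cases (y - p i) with ⟨e4, h4⟩ | ⟨e4, h4⟩ <;>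
      linarith
  · exact Finset.inf'_le _ hmem
end

section
/- Let n ≥ 2 and let 0 ≤ p_1 ≤ p_2 ≤ ⋯ ≤ p_n ≤ 1 be real numbers. Then ∫₀¹ ∫₀¹ min_{1 ≤ i ≤ n} (|x − p_i| + |y − p_i|) dy dx = (2p_1² − 2p_1 + 1) + Σ_{j=2}^n [ (1/3)p_{j−1}³ − (1/3)p_j³ + p_{j−1}² p_j − p_{j−1} p_j² − 2p_{j−1}² + 2p_j² + 2p_{j−1} − 2p_j ]. -/
open intervalIntegral

lemma int_quad (A B C c d : ℝ) :
    ∫ x in c..d, (A + B * x + C * x ^ 2) =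
      (A * d + B * d ^ 2 / 2 + C * d ^ 3 / 3) - (A * c + B * c ^ 2 / 2 + C * c ^ 3 / 3) := by
  have h : ∀ x ∈ Set.uIcc c d, HasDerivAt (fun x : ℝ => A * x + B * x ^ 2 / 2 + C * x ^ 3 / 3)
      (A + B * x + C * x ^ 2) x := by
    intro x _
    have : HasDerivAt (fun x : ℝ => A * x + B * x ^ 2 / 2 + C * x ^ 3 / 3)
        (A * 1 + B * (↑(2:ℕ) * x ^ 1) / 2 + C * (↑(3:ℕ) * x ^ 2) / 3) x :=
      (((hasDerivAt_id x).const_mul A).add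
        (((hasDerivAt_pow 2 x).const_mul B).div_const 2)).add
        (((hasDerivAt_pow 3 x).const_mul C).div_const 3)
    convert this using 1
    push_cast; ring
  rw [integral_eq_sub_of_hasDerivAt h (by apply Continuous.intervalIntegrable; fun_prop)]

lemma cont_inf_y (p : ℕ → ℝ) (s : Finset ℕ) (hs : s.Nonempty) (x : ℝ) :
    Continuous fun y : ℝ => s.inf' hs (fun i => |x - p i| + |y - p i|) :=
  Continuous.finset_inf'_apply hs (fun i _ => by fun_prop)

lemma cont_inf_xy (p : ℕ → ℝ) (s : Finset ℕ) (hs : s.Nonempty) :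
    Continuous fun q : ℝ × ℝ => s.inf' hs (fun i => |q.1 - p i| + |q.2 - p i|) :=
  Continuous.finset_inf'_apply hs (fun i _ => by fun_prop)

lemma cont_param (p : ℕ → ℝ) (s : Finset ℕ) (hs : s.Nonempty) :
    Continuous fun x : ℝ => ∫ y in (0:ℝ)..1, s.inf' hs (fun i => |x - p i| + |y - p i|) := by
  apply intervalIntegral.continuous_parametric_intervalIntegral_of_continuous'
  exact cont_inf_xy p s hs

lemma inner_int (a b x : ℝ) (ha0 : 0 ≤ a) (hab : a ≤ b) (hb1 : b ≤ 1)
    (A : ℝ → ℝ) (hAcont : Continuous A)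
    (hA1 : ∀ y, x ≤ a ∨ y ≤ a → min (|x - b| + |y - b|) (A y) = A y)
    (hA2 : a ≤ x → ∀ y, a ≤ y → A y = x + y - 2 * a) :
    ∫ y in (0:ℝ)..1, (min (|x - b| + |y - b|) (A y) - A y)
      = -(max (min x b) a - a) ^ 2 - 2 * (max (min x b) a - a) * (1 - b) := by
  have ha1 : a ≤ 1 := hab.trans hb1
  have hcont : Continuous fun y => min (|x - b| + |y - b|) (A y) - A y :=
    (Continuous.min (by fun_prop) hAcont).sub hAcont
  by_cases hx : x ≤ a
  · have h0 : Set.EqOn (fun y => min (|x - b| + |y - b|) (A y) - A y) (fun _ => (0:ℝ))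
        (Set.uIcc 0 1) := by
      intro y _
      simp only
      rw [hA1 y (Or.inl hx), sub_self]
    rw [intervalIntegral.integral_congr h0, intervalIntegral.integral_const]
    rw [min_eq_left (hx.trans hab), max_eq_right hx]
    simp
  · push_neg at hx
    have hax : a ≤ x := hx.le
    rw [← intervalIntegral.integral_add_adjacent_intervals (b := a)
      (hcont.intervalIntegrable _ _) (hcont.intervalIntegrable _ _)]
    have h0a : (∫ y in (0:ℝ)..a, (min (|x - b| + |y - b|) (A y) - A y)) = 0 := by
      have h0 : Set.EqOn (fun y => min (|x - b| + |y - b|) (A y) - A y) (fun _ => (0:ℝ))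
          (Set.uIcc 0 a) := by
        intro y hy
        rw [Set.uIcc_of_le ha0] at hy
        simp only
        rw [hA1 y (Or.inr hy.2), sub_self]
      rw [intervalIntegral.integral_congr h0, intervalIntegral.integral_const, smul_zero]
    rw [h0a, zero_add]
    by_cases hxb : x ≤ b
    · have h1 : a ≤ a + b - x := by linarith
      have h2 : a + b - x ≤ b := by linarith
      rw [← intervalIntegral.integral_add_adjacent_intervals (b := a + b - x) (c := 1)
        (hcont.intervalIntegrable _ _) (hcont.intervalIntegrable _ _),
        ← intervalIntegral.integral_add_adjacent_intervals (a := a + b - x) (b := b) (c := 1)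
        (hcont.intervalIntegrable _ _) (hcont.intervalIntegrable _ _)]
      have p1 : (∫ y in a..(a + b - x), (min (|x - b| + |y - b|) (A y) - A y)) = 0 := by
        have h0 : Set.EqOn (fun y => min (|x - b| + |y - b|) (A y) - A y) (fun _ => (0:ℝ))
            (Set.uIcc a (a + b - x)) := by
          intro y hy
          rw [Set.uIcc_of_le h1] at hy
          simp only
          rw [hA2 hax y hy.1, abs_of_nonpos (by linarith), abs_of_nonpos (by linarith [hy.2]),
            min_eq_right (by linarith [hy.2]), sub_self]
        rw [intervalIntegral.integral_congr h0, intervalIntegral.integral_const, smul_zero]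
      have p2 : (∫ y in (a + b - x)..b, (min (|x - b| + |y - b|) (A y) - A y))
          = -(x - a) ^ 2 := by
        have h0 : Set.EqOn (fun y => min (|x - b| + |y - b|) (A y) - A y)
            (fun y => (2*a + 2*b - 2*x) + (-2) * y + 0 * y ^ 2) (Set.uIcc (a + b - x) b) := by
          intro y hy
          rw [Set.uIcc_of_le h2] at hy
          simp only
          rw [hA2 hax y (by linarith [hy.1]), abs_of_nonpos (by linarith),
            abs_of_nonpos (by linarith [hy.2]), min_eq_left (by linarith [hy.1])]
          ring
        rw [intervalIntegral.integral_congr h0, int_quad]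
        ring
      have p3 : (∫ y in b..(1:ℝ), (min (|x - b| + |y - b|) (A y) - A y))
          = -2 * (x - a) * (1 - b) := by
        have h0 : Set.EqOn (fun y => min (|x - b| + |y - b|) (A y) - A y)
            (fun _ => 2*a - 2*x) (Set.uIcc b 1) := by
          intro y hy
          rw [Set.uIcc_of_le hb1] at hy
          simp only
          rw [hA2 hax y (hab.trans hy.1), abs_of_nonpos (by linarith),
            abs_of_nonneg (by linarith [hy.1]), min_eq_left (by linarith)]
          ring
        rw [intervalIntegral.integral_congr h0, intervalIntegral.integral_const, smul_eq_mul]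
        ring
      rw [p1, p2, p3, min_eq_left hxb, max_eq_left hax]
      ring
    · push_neg at hxb
      have hbx : b ≤ x := hxb.le
      rw [← intervalIntegral.integral_add_adjacent_intervals (b := b) (c := 1)
        (hcont.intervalIntegrable _ _) (hcont.intervalIntegrable _ _)]
      have p1 : (∫ y in a..b, (min (|x - b| + |y - b|) (A y) - A y))
          = -(b - a) ^ 2 := by
        have h0 : Set.EqOn (fun y => min (|x - b| + |y - b|) (A y) - A y)
            (fun y => 2*a + (-2) * y + 0 * y ^ 2) (Set.uIcc a b) := by
          intro y hy
          rw [Set.uIcc_of_le hab] at hy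
          simp only
          rw [hA2 hax y hy.1, abs_of_nonneg (by linarith),
            abs_of_nonpos (by linarith [hy.2]), min_eq_left (by linarith [hy.1])]
          ring
        rw [intervalIntegral.integral_congr h0, int_quad]
        ring
      have p2 : (∫ y in b..(1:ℝ), (min (|x - b| + |y - b|) (A y) - A y))
          = -2 * (b - a) * (1 - b) := by
        have h0 : Set.EqOn (fun y => min (|x - b| + |y - b|) (A y) - A y)
            (fun _ => 2*a - 2*b) (Set.uIcc b 1) := by
          intro y hy
          rw [Set.uIcc_of_le hb1] at hy
          simp only
          rw [hA2 hax y (hab.trans hy.1), abs_of_nonneg (by linarith),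
            abs_of_nonneg (by linarith [hy.1]), min_eq_left (by linarith)]
          ring
        rw [intervalIntegral.integral_congr h0, intervalIntegral.integral_const, smul_eq_mul]
        ring
      rw [p1, p2, min_eq_right hbx, max_eq_left hab]
      ring

lemma outer_J (a b : ℝ) (ha0 : 0 ≤ a) (hab : a ≤ b) (hb1 : b ≤ 1) :
    ∫ x in (0:ℝ)..1, (-(max (min x b) a - a) ^ 2 - 2 * (max (min x b) a - a) * (1 - b))
      = -(b - a) ^ 3 / 3 - 2 * (b - a) ^ 2 * (1 - b) - 2 * (b - a) * (1 - b) ^ 2 := by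
  have hcont : Continuous fun x : ℝ =>
      -(max (min x b) a - a) ^ 2 - 2 * (max (min x b) a - a) * (1 - b) := by fun_prop
  rw [← intervalIntegral.integral_add_adjacent_intervals (b := a) (c := 1)
      (hcont.intervalIntegrable _ _) (hcont.intervalIntegrable _ _),
    ← intervalIntegral.integral_add_adjacent_intervals (a := a) (b := b) (c := 1)
      (hcont.intervalIntegrable _ _) (hcont.intervalIntegrable _ _)]
  have p1 : (∫ x in (0:ℝ)..a,
      (-(max (min x b) a - a) ^ 2 - 2 * (max (min x b) a - a) * (1 - b))) = 0 := by
    have h0 : Set.EqOn (fun x : ℝ =>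
        -(max (min x b) a - a) ^ 2 - 2 * (max (min x b) a - a) * (1 - b))
        (fun _ => (0:ℝ)) (Set.uIcc 0 a) := by
      intro x hx
      rw [Set.uIcc_of_le ha0] at hx
      simp only
      rw [min_eq_left (hx.2.trans hab), max_eq_right hx.2]
      ring
    rw [intervalIntegral.integral_congr h0, intervalIntegral.integral_const, smul_zero]
  have p2 : (∫ x in a..b,
      (-(max (min x b) a - a) ^ 2 - 2 * (max (min x b) a - a) * (1 - b)))
      = -(b - a) ^ 3 / 3 - (b - a) ^ 2 * (1 - b) := by
    have h0 : Set.EqOn (fun x : ℝ =>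
        -(max (min x b) a - a) ^ 2 - 2 * (max (min x b) a - a) * (1 - b))
        (fun x => (-(a^2) + 2*a*(1-b)) + (2*a - 2*(1-b)) * x + (-1) * x ^ 2)
        (Set.uIcc a b) := by
      intro x hx
      rw [Set.uIcc_of_le hab] at hx
      simp only
      rw [min_eq_left hx.2, max_eq_left hx.1]
      ring
    rw [intervalIntegral.integral_congr h0, int_quad]
    ring
  have p3 : (∫ x in b..(1:ℝ),
      (-(max (min x b) a - a) ^ 2 - 2 * (max (min x b) a - a) * (1 - b)))
      = (1 - b) * (-(b - a) ^ 2 - 2 * (b - a) * (1 - b)) := by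
    have h0 : Set.EqOn (fun x : ℝ =>
        -(max (min x b) a - a) ^ 2 - 2 * (max (min x b) a - a) * (1 - b))
        (fun _ => -(b - a) ^ 2 - 2 * (b - a) * (1 - b)) (Set.uIcc b 1) := by
      intro x hx
      rw [Set.uIcc_of_le hb1] at hx
      simp only
      rw [min_eq_right hx.1, max_eq_left hab]
    rw [intervalIntegral.integral_congr h0, intervalIntegral.integral_const, smul_eq_mul]
  rw [p1, p2, p3]
  ring

lemma int_abs (c : ℝ) (h0 : 0 ≤ c) (h1 : c ≤ 1) :
    ∫ y in (0:ℝ)..1, |y - c| = c ^ 2 / 2 + (1 - c) ^ 2 / 2 := by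
  have hcont : Continuous fun y : ℝ => |y - c| := by fun_prop
  rw [← intervalIntegral.integral_add_adjacent_intervals (b := c) (c := 1)
      (hcont.intervalIntegrable _ _) (hcont.intervalIntegrable _ _)]
  have p1 : (∫ y in (0:ℝ)..c, |y - c|) = c ^ 2 / 2 := by
    have h : Set.EqOn (fun y : ℝ => |y - c|) (fun y => c + (-1) * y + 0 * y ^ 2)
        (Set.uIcc 0 c) := by
      intro y hy
      rw [Set.uIcc_of_le h0] at hy
      simp only
      rw [abs_of_nonpos (by linarith [hy.2])]
      ring
    rw [intervalIntegral.integral_congr h, int_quad]; ring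
  have p2 : (∫ y in c..(1:ℝ), |y - c|) = (1 - c) ^ 2 / 2 := by
    have h : Set.EqOn (fun y : ℝ => |y - c|) (fun y => -c + 1 * y + 0 * y ^ 2)
        (Set.uIcc c 1) := by
      intro y hy
      rw [Set.uIcc_of_le h1] at hy
      simp only
      rw [abs_of_nonneg (by linarith [hy.1])]
      ring
    rw [intervalIntegral.integral_congr h, int_quad]; ring
  rw [p1, p2]

lemma base_case (c : ℝ) (h0 : 0 ≤ c) (h1 : c ≤ 1) :
    (∫ x in (0:ℝ)..1, ∫ y in (0:ℝ)..1, (|x - c| + |y - c|)) = 2 * c ^ 2 - 2 * c + 1 := by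
  have habs : Continuous fun y : ℝ => |y - c| := by fun_prop
  have hinner : ∀ x : ℝ, (∫ y in (0:ℝ)..1, (|x - c| + |y - c|))
      = |x - c| + (c ^ 2 / 2 + (1 - c) ^ 2 / 2) := by
    intro x
    rw [intervalIntegral.integral_add (intervalIntegrable_const)
      (habs.intervalIntegrable _ _), intervalIntegral.integral_const, int_abs c h0 h1]
    simp
  have h : Set.EqOn (fun x : ℝ => ∫ y in (0:ℝ)..1, (|x - c| + |y - c|))
      (fun x => |x - c| + (c ^ 2 / 2 + (1 - c) ^ 2 / 2)) (Set.uIcc 0 1) :=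
    fun x _ => hinner x
  rw [intervalIntegral.integral_congr h,
    intervalIntegral.integral_add (habs.intervalIntegrable _ _) intervalIntegrable_const,
    int_abs c h0 h1, intervalIntegral.integral_const]
  simp
  ring

lemma key : ∀ (n : ℕ) (hn : 1 ≤ n) (p : ℕ → ℝ), 0 ≤ p 1 → p n ≤ 1 →
    (∀ i j, 1 ≤ i → i ≤ j → j ≤ n → p i ≤ p j) →
    (∫ x in (0:ℝ)..1, ∫ y in (0:ℝ)..1,
        (Finset.Icc 1 n).inf' (Finset.nonempty_Icc.mpr hn) (fun i => |x - p i| + |y - p i|))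
      = (2 * p 1 ^ 2 - 2 * p 1 + 1)
        + ∑ j ∈ Finset.Icc 2 n,
            ((1/3) * p (j - 1) ^ 3 - (1/3) * p j ^ 3 + p (j - 1) ^ 2 * p j
              - p (j - 1) * p j ^ 2 - 2 * p (j - 1) ^ 2 + 2 * p j ^ 2
              + 2 * p (j - 1) - 2 * p j) := by
  intro n
  induction n with
  | zero => intro hn; exact absurd hn (by norm_num)
  | succ m ih =>
    intro hn p hp0 hp1 hmono
    by_cases hm : m = 0
    · subst hm
      have h1 : ∀ x y : ℝ, (Finset.Icc 1 (0 + 1)).inf' (Finset.nonempty_Icc.mpr hn)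
          (fun i => |x - p i| + |y - p i|) = |x - p 1| + |y - p 1| := by
        intro x y
        apply le_antisymm
        · exact Finset.inf'_le _ (by simp)
        · apply Finset.le_inf'
          intro i hi
          simp only [Finset.mem_Icc] at hi
          have hieq : i = 1 := by omega
          subst hieq
          exact le_rfl
      have h2 : Set.EqOn
          (fun x => ∫ y in (0:ℝ)..1, (Finset.Icc 1 (0 + 1)).inf'
            (Finset.nonempty_Icc.mpr hn) (fun i => |x - p i| + |y - p i|))
          (fun x => ∫ y in (0:ℝ)..1, (|x - p 1| + |y - p 1|)) (Set.uIcc 0 1) := by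
        intro x _
        exact intervalIntegral.integral_congr (fun y _ => h1 x y)
      rw [intervalIntegral.integral_congr h2,
        show Finset.Icc 2 (0 + 1) = ∅ from Finset.Icc_eq_empty (by omega),
        Finset.sum_empty, add_zero]
      exact base_case (p 1) hp0 hp1
    · have hm1 : 1 ≤ m := by omega
      have hmne : (Finset.Icc 1 m).Nonempty := Finset.nonempty_Icc.mpr hm1
      have hab : p m ≤ p (m + 1) := hmono m (m + 1) hm1 (Nat.le_succ m) le_rfl
      have hp1m : p 1 ≤ p m := hmono 1 m le_rfl hm1 (Nat.le_succ m)
      have ha0 : 0 ≤ p m := hp0.trans hp1m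
      have hb1 : p (m + 1) ≤ 1 := hp1
      have ha1 : p m ≤ 1 := hab.trans hb1
      have hsplit : ∀ x y : ℝ,
          (Finset.Icc 1 (m + 1)).inf' (Finset.nonempty_Icc.mpr hn)
            (fun i => |x - p i| + |y - p i|)
          = min (|x - p (m + 1)| + |y - p (m + 1)|)
              ((Finset.Icc 1 m).inf' hmne fun i => |x - p i| + |y - p i|) := by
        intro x y
        apply le_antisymm
        · apply le_min
          · exact Finset.inf'_le _ (by simp)
          · apply Finset.le_inf'
            intro i hi
            refine Finset.inf'_le _ ?_
            simp only [Finset.mem_Icc] at hi ⊢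
            omega
        · apply Finset.le_inf'
          intro i hi
          simp only [Finset.mem_Icc] at hi
          rcases Nat.lt_or_ge i (m + 1) with h | h
          · exact (min_le_right _ _).trans
              (Finset.inf'_le _ (by simp only [Finset.mem_Icc]; omega))
          · have hieq : i = m + 1 := by omega
            subst hieq
            exact min_le_left _ _
      have hA1 : ∀ x y : ℝ, x ≤ p m ∨ y ≤ p m →
          min (|x - p (m + 1)| + |y - p (m + 1)|)
            ((Finset.Icc 1 m).inf' hmne fun i => |x - p i| + |y - p i|)
          = (Finset.Icc 1 m).inf' hmne fun i => |x - p i| + |y - p i| := by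
        intro x y hxy
        apply min_eq_right
        have h1 : ((Finset.Icc 1 m).inf' hmne fun i => |x - p i| + |y - p i|)
            ≤ |x - p m| + |y - p m| := Finset.inf'_le _ (by simp [hm1])
        refine h1.trans ?_
        rcases hxy with hx | hy
        · have e1 : |x - p m| = -(x - p m) := abs_of_nonpos (by linarith)
          have e2 : |x - p (m + 1)| = -(x - p (m + 1)) := abs_of_nonpos (by linarith)
          have e3 : |y - p m| ≤ |y - p (m + 1)| + |p (m + 1) - p m| := abs_sub_le _ _ _
          have e4 : |p (m + 1) - p m| = p (m + 1) - p m := abs_of_nonneg (by linarith)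
          linarith [e3, e4.symm ▸ e3]
        · have e1 : |y - p m| = -(y - p m) := abs_of_nonpos (by linarith)
          have e2 : |y - p (m + 1)| = -(y - p (m + 1)) := abs_of_nonpos (by linarith)
          have e3 : |x - p m| ≤ |x - p (m + 1)| + |p (m + 1) - p m| := abs_sub_le _ _ _
          have e4 : |p (m + 1) - p m| = p (m + 1) - p m := abs_of_nonneg (by linarith)
          linarith [e3, e4.symm ▸ e3]
      have hA2 : ∀ x y : ℝ, p m ≤ x → p m ≤ y →
          ((Finset.Icc 1 m).inf' hmne fun i => |x - p i| + |y - p i|)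
          = x + y - 2 * p m := by
        intro x y hx hy
        apply le_antisymm
        · have h1 : ((Finset.Icc 1 m).inf' hmne fun i => |x - p i| + |y - p i|)
              ≤ |x - p m| + |y - p m| := Finset.inf'_le _ (by simp [hm1])
          rw [abs_of_nonneg (by linarith), abs_of_nonneg (by linarith)] at h1
          linarith
        · apply Finset.le_inf'
          intro i hi
          simp only [Finset.mem_Icc] at hi
          have hpi : p i ≤ p m := hmono i m hi.1 hi.2 (Nat.le_succ m)
          have l1 := le_abs_self (x - p i)
          have l2 := le_abs_self (y - p i)
          linarith
      have hinner : ∀ x : ℝ,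
          (∫ y in (0:ℝ)..1, (Finset.Icc 1 (m + 1)).inf' (Finset.nonempty_Icc.mpr hn)
              (fun i => |x - p i| + |y - p i|))
          = (∫ y in (0:ℝ)..1, (Finset.Icc 1 m).inf' hmne fun i => |x - p i| + |y - p i|)
            + (-(max (min x (p (m + 1))) (p m) - p m) ^ 2
                - 2 * (max (min x (p (m + 1))) (p m) - p m) * (1 - p (m + 1))) := by
        intro x
        have hAmy : Continuous fun y =>
            (Finset.Icc 1 m).inf' hmne fun i => |x - p i| + |y - p i| :=
          cont_inf_y p _ hmne x
        have hφy : Continuous fun y =>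
            min (|x - p (m + 1)| + |y - p (m + 1)|)
              ((Finset.Icc 1 m).inf' hmne fun i => |x - p i| + |y - p i|)
            - (Finset.Icc 1 m).inf' hmne fun i => |x - p i| + |y - p i| :=
          (Continuous.min (by fun_prop) hAmy).sub hAmy
        have hEq : Set.EqOn
            (fun y => (Finset.Icc 1 (m + 1)).inf' (Finset.nonempty_Icc.mpr hn)
              (fun i => |x - p i| + |y - p i|))
            (fun y => ((Finset.Icc 1 m).inf' hmne fun i => |x - p i| + |y - p i|)
              + (min (|x - p (m + 1)| + |y - p (m + 1)|)
                  ((Finset.Icc 1 m).inf' hmne fun i => |x - p i| + |y - p i|)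
                - (Finset.Icc 1 m).inf' hmne fun i => |x - p i| + |y - p i|))
            (Set.uIcc 0 1) := by
          intro y _
          simp only
          rw [hsplit x y]
          ring
        rw [intervalIntegral.integral_congr hEq,
          intervalIntegral.integral_add (hAmy.intervalIntegrable _ _)
            (hφy.intervalIntegrable _ _),
          inner_int (p m) (p (m + 1)) x ha0 hab hb1 _ hAmy
            (fun y h => hA1 x y h) (fun hx y hy => hA2 x y hx hy)]
      have hEq2 : Set.EqOn
          (fun x => ∫ y in (0:ℝ)..1, (Finset.Icc 1 (m + 1)).inf'
            (Finset.nonempty_Icc.mpr hn) (fun i => |x - p i| + |y - p i|))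
          (fun x => (∫ y in (0:ℝ)..1,
              (Finset.Icc 1 m).inf' hmne fun i => |x - p i| + |y - p i|)
            + (-(max (min x (p (m + 1))) (p m) - p m) ^ 2
                - 2 * (max (min x (p (m + 1))) (p m) - p m) * (1 - p (m + 1))))
          (Set.uIcc 0 1) := fun x _ => hinner x
      have hJcont : Continuous fun x : ℝ =>
          -(max (min x (p (m + 1))) (p m) - p m) ^ 2
            - 2 * (max (min x (p (m + 1))) (p m) - p m) * (1 - p (m + 1)) := by fun_prop
      rw [intervalIntegral.integral_congr hEq2,
        intervalIntegral.integral_add ((cont_param p _ hmne).intervalIntegrable _ _)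
          (hJcont.intervalIntegrable _ _),
        outer_J (p m) (p (m + 1)) ha0 hab hb1,
        ih hm1 p hp0 ha1 (fun i j h1 h2 h3 => hmono i j h1 h2 (h3.trans (Nat.le_succ m))),
        Finset.sum_Icc_succ_top (by omega : 2 ≤ m + 1)]
      simp only [Nat.add_sub_cancel]
      ring

theorem stmt_9 (n : ℕ) (hn : 2 ≤ n) (p : ℕ → ℝ)
    (hp0 : 0 ≤ p 1) (hp1 : p n ≤ 1)
    (hmono : ∀ i j, 1 ≤ i → i ≤ j → j ≤ n → p i ≤ p j) :
    (∫ x in (0:ℝ)..1, ∫ y in (0:ℝ)..1,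
        (Finset.Icc 1 n).inf' (Finset.nonempty_Icc.mpr (le_trans one_le_two hn))
          (fun i => |x - p i| + |y - p i|))
      = (2 * p 1 ^ 2 - 2 * p 1 + 1)
        + ∑ j ∈ Finset.Icc 2 n,
            ((1/3) * p (j - 1) ^ 3 - (1/3) * p j ^ 3 + p (j - 1) ^ 2 * p j
              - p (j - 1) * p j ^ 2 - 2 * p (j - 1) ^ 2 + 2 * p j ^ 2
              + 2 * p (j - 1) - 2 * p j) :=
  key n (le_trans one_le_two hn) p hp0 hp1 hmono
end

section
/- Let n ≥ 2 and let 0 < p_1 < p_2 < ⋯ < p_n < 1 be real numbers. Then the partial derivative with respect to p_1 of the function F_n(p_1,…,p_n) = ∫₀¹ ∫₀¹ min_{1 ≤ i ≤ n} (|x − p_i| + |y − p_i|) dy dx, evaluated at (p_1,…,p_n), equals p_1² + 2 p_1 p_2 − p_2². -/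
/-!
For `t` near `p 1` we have `0 < t < p 2`. Since `q ↦ |x - q| + |y - q|` is convex, a trip that is
strictly shorter through `t` than through `p 2` is not shorter through any later hub, so the
integrand splits as `B x y + min (d_t - d_{p 2}) 0`, where `d_q = |x - q| + |y - q|` and `B` does
not depend on `t`. The second term is piecewise polynomial and integrates over the unit square to
`t³/3 + p₂ t² - p₂² t - p₂³/3`, whose derivative in `t` is `t² + 2 p₂ t - p₂²`.
-/

open Set intervalIntegral Function Filter Topology

lemma integral_eq_of_eqOn_quadratic {f : ℝ → ℝ} {u v : ℝ} (c e k : ℝ) (huv : u ≤ v)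
    (hf : ∀ x ∈ Icc u v, f x = c + e * x + k * x ^ 2) :
    ∫ x in u..v, f x = c * (v - u) + e * (v ^ 2 - u ^ 2) / 2 + k * (v ^ 3 - u ^ 3) / 3 := by
  rw [integral_congr (g := fun x => c + e * x + k * x ^ 2) (by rwa [uIcc_of_le huv]),
    integral_add (Continuous.intervalIntegrable (by fun_prop) _ _)
      (Continuous.intervalIntegrable (by fun_prop) _ _),
    integral_add intervalIntegrable_const (Continuous.intervalIntegrable (by fun_prop) _ _),
    integral_const_mul, integral_const_mul, integral_id, integral_pow]
  simp only [integral_const, smul_eq_mul]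
  ring

lemma integral_integral_add {f g : ℝ → ℝ → ℝ} (hf : Continuous (uncurry f))
    (hg : Continuous (uncurry g)) (a b c d : ℝ) :
    ∫ x in a..b, ∫ y in c..d, (f x y + g x y) =
      (∫ x in a..b, ∫ y in c..d, f x y) + ∫ x in a..b, ∫ y in c..d, g x y := by
  rw [← integral_add
    ((continuous_parametric_intervalIntegral_of_continuous' hf c d).intervalIntegrable _ _)
    ((continuous_parametric_intervalIntegral_of_continuous' hg c d).intervalIntegrable _ _)]
  exact integral_congr fun x _ => integral_add
    ((hf.comp (Continuous.prodMk_right x)).intervalIntegrable _ _)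
    ((hg.comp (Continuous.prodMk_right x)).intervalIntegrable _ _)

lemma min_inf'_eq_inf'_add_min_sub {ι α : Type*} [AddCommGroup α] [LinearOrder α]
    [IsOrderedAddMonoid α] {s : Finset ι} (hs : s.Nonempty) (g : ι → α) {i₀ : ι} (hi₀ : i₀ ∈ s)
    {A : α} (hA : A < g i₀ → ∀ i ∈ s, g i₀ ≤ g i) :
    min A (s.inf' hs g) = s.inf' hs g + min (A - g i₀) 0 := by
  have hle : s.inf' hs g ≤ g i₀ := s.inf'_le g hi₀
  by_cases h : A < g i₀
  · have heq : s.inf' hs g = g i₀ := le_antisymm hle (s.le_inf' hs g (hA h))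
    rw [heq, min_eq_left h.le, min_eq_left (sub_nonpos.mpr h.le), add_sub_cancel]
  · push Not at h
    rw [min_eq_right (hle.trans h), min_eq_right (sub_nonneg.mpr h), add_zero]

noncomputable def tripLength (q x y : ℝ) : ℝ := |x - q| + |y - q|

lemma convexOn_tripLength (x y : ℝ) : ConvexOn ℝ univ fun q => tripLength q x y := by
  refine ((convexOn_univ_dist x).add (convexOn_univ_dist y)).congr fun q _ => ?_
  simp only [Pi.add_apply, Real.dist_eq, tripLength, abs_sub_comm]

lemma tripLength_le_of_lt {t a b x y : ℝ} (hta : t < a) (hab : a ≤ b)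
    (h : tripLength t x y < tripLength a x y) : tripLength a x y ≤ tripLength b x y :=
  (convexOn_tripLength x y).le_right_of_left_le'' trivial trivial hta hab h.le

noncomputable def tripGain (t a x y : ℝ) : ℝ := min (tripLength t x y - tripLength a x y) 0

lemma continuous_tripGain (t a : ℝ) : Continuous (uncurry (tripGain t a)) := by
  simp only [uncurry_def, tripGain, tripLength]
  fun_prop

lemma intervalIntegrable_tripGain (t a x u v : ℝ) :
    IntervalIntegrable (tripGain t a x) MeasureTheory.volume u v :=
  ((continuous_tripGain t a).comp (Continuous.prodMk_right x)).intervalIntegrable u v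

noncomputable def legDiff (t a u : ℝ) : ℝ := |u - t| - |u - a|

lemma tripGain_eq_min_legDiff (t a x y : ℝ) :
    tripGain t a x y = min (legDiff t a x + legDiff t a y) 0 := by
  simp only [tripGain, tripLength, legDiff]
  ring_nf

section legDiff

variable {t a u : ℝ}

lemma legDiff_of_le_left (hut : u ≤ t) (hta : t ≤ a) : legDiff t a u = t - a := by
  rw [legDiff, abs_of_nonpos (by linarith), abs_of_nonpos (by linarith)]
  ring

lemma legDiff_of_mem_Icc (htu : t ≤ u) (hua : u ≤ a) : legDiff t a u = 2 * u - t - a := by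
  rw [legDiff, abs_of_nonneg (by linarith), abs_of_nonpos (by linarith)]
  ring

lemma legDiff_of_right_le (hta : t ≤ a) (hau : a ≤ u) : legDiff t a u = a - t := by
  rw [legDiff, abs_of_nonneg (by linarith), abs_of_nonneg (by linarith)]
  ring

lemma sub_le_legDiff (hta : t ≤ a) : t - a ≤ legDiff t a u := by
  have h := abs_sub_abs_le_abs_sub (u - a) (u - t)
  rw [sub_sub_sub_cancel_left, abs_of_nonpos (sub_nonpos.mpr hta)] at h
  rw [legDiff]
  linarith

end legDiff

section integrals

variable {t a x : ℝ}

lemma integral_tripGain_of_le_left (ht0 : 0 ≤ t) (hta : t ≤ a) (ha1 : a ≤ 1) (hxt : x ≤ t) :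
    ∫ y in (0 : ℝ)..1, tripGain t a x y = t ^ 2 - a ^ 2 := by
  have hint := intervalIntegrable_tripGain t a x
  rw [← integral_add_adjacent_intervals (hint 0 t) (hint t 1),
    ← integral_add_adjacent_intervals (hint t a) (hint a 1),
    integral_eq_of_eqOn_quadratic (2 * t - 2 * a) 0 0 ht0 fun y ⟨_, hyt⟩ => by
      rw [tripGain_eq_min_legDiff, legDiff_of_le_left hxt hta, legDiff_of_le_left hyt hta,
        min_eq_left (by linarith)]; ring,
    integral_eq_of_eqOn_quadratic (-2 * a) 2 0 hta fun y ⟨hty, hya⟩ => by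
      rw [tripGain_eq_min_legDiff, legDiff_of_le_left hxt hta, legDiff_of_mem_Icc hty hya,
        min_eq_left (by linarith)]; ring,
    integral_eq_of_eqOn_quadratic 0 0 0 ha1 fun y ⟨hay, _⟩ => by
      rw [tripGain_eq_min_legDiff, legDiff_of_le_left hxt hta, legDiff_of_right_le hta hay,
        min_eq_right (by linarith)]; ring]
  ring

-- `legDiff t a x + legDiff t a y` changes sign at `y = t + a - x`.
lemma integral_tripGain_of_mem_Icc (ht0 : 0 ≤ t) (htx : t ≤ x) (hxa : x ≤ a) (ha1 : a ≤ 1) :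
    ∫ y in (0 : ℝ)..1, tripGain t a x y = -x ^ 2 + 2 * (t + a) * x - 2 * t * a - a ^ 2 := by
  have hint := intervalIntegrable_tripGain t a x
  have hta : t ≤ a := htx.trans hxa
  rw [← integral_add_adjacent_intervals (hint 0 t) (hint t 1),
    ← integral_add_adjacent_intervals (hint t (t + a - x)) (hint _ 1),
    ← integral_add_adjacent_intervals (hint (t + a - x) a) (hint a 1),
    integral_eq_of_eqOn_quadratic (2 * x - 2 * a) 0 0 ht0 fun y ⟨_, hyt⟩ => by
      rw [tripGain_eq_min_legDiff, legDiff_of_mem_Icc htx hxa, legDiff_of_le_left hyt hta,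
        min_eq_left (by linarith)]; ring,
    integral_eq_of_eqOn_quadratic (2 * x - 2 * t - 2 * a) 2 0 (by linarith) fun y ⟨hty, hy⟩ => by
      rw [tripGain_eq_min_legDiff, legDiff_of_mem_Icc htx hxa,
        legDiff_of_mem_Icc hty (by linarith), min_eq_left (by linarith)]; ring,
    integral_eq_of_eqOn_quadratic 0 0 0 (by linarith) fun y ⟨hy, hya⟩ => by
      rw [tripGain_eq_min_legDiff, legDiff_of_mem_Icc htx hxa,
        legDiff_of_mem_Icc (by linarith) hya, min_eq_right (by linarith)]; ring,
    integral_eq_of_eqOn_quadratic 0 0 0 ha1 fun y ⟨hay, _⟩ => by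
      rw [tripGain_eq_min_legDiff, legDiff_of_mem_Icc htx hxa, legDiff_of_right_le hta hay,
        min_eq_right (by linarith)]; ring]
  ring

lemma tripGain_of_right_le (hta : t ≤ a) (hax : a ≤ x) (y : ℝ) : tripGain t a x y = 0 := by
  rw [tripGain_eq_min_legDiff, legDiff_of_right_le hta hax]
  exact min_eq_right (by linarith [sub_le_legDiff (u := y) hta])

lemma integral_integral_tripGain (ht0 : 0 ≤ t) (hta : t ≤ a) (ha1 : a ≤ 1) :
    ∫ x in (0 : ℝ)..1, ∫ y in (0 : ℝ)..1, tripGain t a x y =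
      t ^ 3 / 3 + a * t ^ 2 - a ^ 2 * t - a ^ 3 / 3 := by
  have hint : ∀ u v : ℝ,
      IntervalIntegrable (fun x => ∫ y in (0 : ℝ)..1, tripGain t a x y) MeasureTheory.volume u v :=
    (continuous_parametric_intervalIntegral_of_continuous'
      (continuous_tripGain t a) 0 1).intervalIntegrable
  rw [← integral_add_adjacent_intervals (hint 0 t) (hint t 1),
    ← integral_add_adjacent_intervals (hint t a) (hint a 1),
    integral_eq_of_eqOn_quadratic (t ^ 2 - a ^ 2) 0 0 ht0 fun x ⟨_, hxt⟩ => by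
      rw [integral_tripGain_of_le_left ht0 hta ha1 hxt]; ring,
    integral_eq_of_eqOn_quadratic (-2 * t * a - a ^ 2) (2 * (t + a)) (-1) hta
      fun x ⟨htx, hxa⟩ => by
      rw [integral_tripGain_of_mem_Icc ht0 htx hxa ha1]; ring,
    integral_eq_of_eqOn_quadratic 0 0 0 ha1 fun x ⟨hax, _⟩ => by
      simp only [tripGain_of_right_le hta hax, integral_zero]; ring]
  ring

end integrals

lemma inf'_tripLength_update_eq {n : ℕ} (hn : 2 ≤ n) {p : ℕ → ℝ}
    (hp : ∀ i ∈ Finset.Icc 2 n, p 2 ≤ p i) {t : ℝ} (ht : t < p 2) (x y : ℝ) :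
    (Finset.Icc 1 n).inf' (Finset.nonempty_Icc.mpr (one_le_two.trans hn))
        (fun i => tripLength (update p 1 t i) x y) =
      (Finset.Icc 2 n).inf' (Finset.nonempty_Icc.mpr hn) (fun i => tripLength (p i) x y) +
        tripGain t (p 2) x y := by
  have h2 : (Finset.Icc 2 n).Nonempty := Finset.nonempty_Icc.mpr hn
  have hupd : ∀ i ∈ Finset.Icc 2 n, tripLength (update p 1 t i) x y = tripLength (p i) x y :=
    fun i hi => by rw [update_of_ne (by simp only [Finset.mem_Icc] at hi; omega)]
  have hIcc : Finset.Icc 1 n = insert 1 (Finset.Icc 2 n) :=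
    (Finset.insert_Icc_add_one_left_eq_Icc (one_le_two.trans hn)).symm
  rw [Finset.inf'_congr _ hIcc fun _ _ => rfl, Finset.inf'_insert (H := h2), update_self,
    Finset.inf'_congr h2 rfl hupd]
  exact min_inf'_eq_inf'_add_min_sub h2 _ (Finset.left_mem_Icc.mpr hn)
    fun h i hi => tripLength_le_of_lt ht (hp i hi) h

theorem stmt_10 (n : ℕ) (hn : 2 ≤ n) (p : ℕ → ℝ)
    (hp0 : 0 < p 1) (hp1 : p n < 1)
    (hmono : ∀ i j, 1 ≤ i → i < j → j ≤ n → p i < p j) :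
    HasDerivAt
      (fun t : ℝ =>
        ∫ x in (0:ℝ)..1, ∫ y in (0:ℝ)..1,
          (Finset.Icc 1 n).inf' (Finset.nonempty_Icc.mpr (le_trans one_le_two hn))
            (fun i => |x - Function.update p 1 t i| + |y - Function.update p 1 t i|))
      (p 1 ^ 2 + 2 * p 1 * p 2 - p 2 ^ 2) (p 1) := by
  have hp2 : ∀ i ∈ Finset.Icc 2 n, p 2 ≤ p i := fun i hi => by
    obtain ⟨h2i, hin⟩ := Finset.mem_Icc.mp hi
    exact h2i.eq_or_lt.elim (fun h => h ▸ le_rfl) fun h => (hmono 2 i one_le_two h hin).le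
  have hp21 : p 2 < 1 := (hp2 n (Finset.right_mem_Icc.mpr hn)).trans_lt hp1
  set B : ℝ → ℝ → ℝ := fun x y =>
    (Finset.Icc 2 n).inf' (Finset.nonempty_Icc.mpr hn) fun i => tripLength (p i) x y
  have hB : Continuous (uncurry B) :=
    Continuous.finset_inf'_apply (Finset.nonempty_Icc.mpr hn) fun i _ => by
      simp only [tripLength]
      fun_prop
  have hcubic : HasDerivAt (fun t => t ^ 3 / 3 + p 2 * t ^ 2 - p 2 ^ 2 * t - p 2 ^ 3 / 3)
      (p 1 ^ 2 + 2 * p 1 * p 2 - p 2 ^ 2) (p 1) := by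
    refine (((((hasDerivAt_pow 3 (p 1)).div_const 3).add
      ((hasDerivAt_pow 2 (p 1)).const_mul (p 2))).sub
      ((hasDerivAt_id' (p 1)).const_mul (p 2 ^ 2))).sub_const (p 2 ^ 3 / 3)).congr_deriv ?_
    push_cast
    ring
  refine (hcubic.const_add (∫ x in (0:ℝ)..1, ∫ y in (0:ℝ)..1, B x y)).congr_of_eventuallyEq
    ?_
  filter_upwards [Ioo_mem_nhds hp0 (hmono 1 2 le_rfl one_lt_two hn)] with t ⟨ht0, ht2⟩
  rw [← integral_integral_tripGain ht0.le ht2.le hp21.le,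
    ← integral_integral_add hB (continuous_tripGain t (p 2))]
  exact integral_congr fun x _ => integral_congr fun y _ =>
    inf'_tripLength_update_eq hn hp2 ht2 x y
end

section
/- Let n ≥ 1 and let S = { (p_1,…,p_n) ∈ ℝⁿ : 0 ≤ p_1 ≤ p_2 ≤ ⋯ ≤ p_n ≤ 1 }. The function F_n : S → ℝ defined by F_n(p_1,…,p_n) = ∫₀¹ ∫₀¹ min_{1 ≤ i ≤ n} (|x − p_i| + |y − p_i|) dy dx is convex on S. -/
open MeasureTheory intervalIntegral

noncomputable def Pfun (u t : ℝ) : ℝ := (t^2 - (max (t - min u (2-u)) 0)^2)/2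

lemma Pfun_cont : Continuous fun z : ℝ × ℝ => Pfun z.1 z.2 := by
  unfold Pfun; fun_prop

lemma abs_add_abs_eq_max (a b : ℝ) : |a| + |b| = max (|a+b|) (|a-b|) := by
  apply le_antisymm
  · rcases le_total 0 a with ha|ha <;> rcases le_total 0 b with hb|hb
    · refine le_trans (le_of_eq ?_) (le_max_left _ _)
      rw [abs_of_nonneg ha, abs_of_nonneg hb, abs_of_nonneg (by linarith)]
    · refine le_trans (le_of_eq ?_) (le_max_right _ _)
      rw [abs_of_nonneg ha, abs_of_nonpos hb, abs_of_nonneg (by linarith)]; ring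
    · refine le_trans (le_of_eq ?_) (le_max_right _ _)
      rw [abs_of_nonpos ha, abs_of_nonneg hb, abs_of_nonpos (by linarith)]; ring
    · refine le_trans (le_of_eq ?_) (le_max_left _ _)
      rw [abs_of_nonpos ha, abs_of_nonpos hb, abs_of_nonpos (by linarith)]; ring
  · exact max_le (abs_add_le _ _) (abs_sub _ _)

lemma key_pointwise (x y t : ℝ) : |x - t| + |y - t| = max (|x-y|) (|x+y-2*t|) := by
  have h := abs_add_abs_eq_max (x - t) (t - y)
  have e1 : x - t + (t - y) = x - y := by ring
  have e2 : x - t - (t - y) = x + y - 2*t := by ring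
  rw [e1, e2, abs_sub_comm t y] at h
  exact h

lemma inf'_max_const {s : Finset ℕ} (hs : s.Nonempty) (c : ℝ) (f : ℕ → ℝ) :
    s.inf' hs (fun i => max c (f i)) = max c (s.inf' hs f) := by
  apply le_antisymm
  · obtain ⟨i, hi, hfi⟩ := Finset.exists_mem_eq_inf' hs f
    calc s.inf' hs (fun i => max c (f i)) ≤ max c (f i) := Finset.inf'_le _ hi
    _ = max c (s.inf' hs f) := by rw [hfi]
  · apply Finset.le_inf'
    intro i hi
    exact max_le_max le_rfl (Finset.inf'_le _ hi)

lemma quad_int (A B C a b : ℝ) :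
    ∫ u in a..b, (A + B*u + C*u^2) = A*(b-a) + B*(b^2-a^2)/2 + C*(b^3-a^3)/3 := by
  have h1 : IntervalIntegrable (fun _ : ℝ => A) volume a b := intervalIntegrable_const
  have h2 : IntervalIntegrable (fun u : ℝ => B*u) volume a b := by
    apply Continuous.intervalIntegrable; fun_prop
  have h3 : IntervalIntegrable (fun u : ℝ => C*u^2) volume a b := by
    apply Continuous.intervalIntegrable; fun_prop
  rw [integral_add (h1.add h2) h3, integral_add h1 h2, intervalIntegral.integral_const,
    intervalIntegral.integral_const_mul, intervalIntegral.integral_const_mul, integral_id,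
    integral_pow]
  push_cast
  rw [smul_eq_mul]
  ring

lemma symm_int (r t : ℝ) (hr : 0 ≤ r) (ht : 0 ≤ t) :
    ∫ z in (-r)..r, max (2*|z|) t = 2*r^2 + t^2/2 - (max (t - 2*r) 0)^2/2 := by
  have hcont : Continuous fun z : ℝ => max (2*|z|) t := by fun_prop
  rcases le_total t (2*r) with h|h
  · have h1 : IntervalIntegrable (fun z : ℝ => max (2*|z|) t) volume (-r) (-(t/2)) :=
      hcont.intervalIntegrable _ _
    have h2 : IntervalIntegrable (fun z : ℝ => max (2*|z|) t) volume (-(t/2)) (t/2) :=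
      hcont.intervalIntegrable _ _
    have h3 : IntervalIntegrable (fun z : ℝ => max (2*|z|) t) volume (t/2) r :=
      hcont.intervalIntegrable _ _
    rw [← integral_add_adjacent_intervals (h1.trans h2) h3,
        ← integral_add_adjacent_intervals h1 h2]
    have e1 : ∫ z in (-r)..(-(t/2)), max (2*|z|) t = ∫ z in (-r)..(-(t/2)), (0 + (-2)*z + 0*z^2) := by
      apply integral_congr
      intro z hz
      rw [Set.uIcc_of_le (by linarith)] at hz
      obtain ⟨hz1, hz2⟩ := hz
      have h' : |z| = -z := abs_of_nonpos (by linarith)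
      show max (2*|z|) t = _
      rw [h', max_eq_left (by linarith)]
      ring
    have e2 : ∫ z in (-(t/2))..(t/2), max (2*|z|) t = ∫ z in (-(t/2))..(t/2), (t + 0*z + 0*z^2) := by
      apply integral_congr
      intro z hz
      rw [Set.uIcc_of_le (by linarith)] at hz
      obtain ⟨hz1, hz2⟩ := hz
      show max (2*|z|) t = _
      rw [max_eq_right]
      · ring
      · rcases abs_cases z with ⟨h',_⟩|⟨h',_⟩ <;> rw [h'] <;> linarith
    have e3 : ∫ z in (t/2)..r, max (2*|z|) t = ∫ z in (t/2)..r, (0 + 2*z + 0*z^2) := by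
      apply integral_congr
      intro z hz
      rw [Set.uIcc_of_le (by linarith)] at hz
      obtain ⟨hz1, hz2⟩ := hz
      have h' : |z| = z := abs_of_nonneg (by linarith)
      show max (2*|z|) t = _
      rw [h', max_eq_left (by linarith)]
      ring
    rw [e1, e2, e3, quad_int, quad_int, quad_int, max_eq_right (by linarith)]
    ring
  · have e : ∫ z in (-r)..r, max (2*|z|) t = ∫ z in (-r)..r, (t + 0*z + 0*z^2) := by
      apply integral_congr
      intro z hz
      rw [Set.uIcc_of_le (by linarith)] at hz
      obtain ⟨hz1, hz2⟩ := hz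
      show max (2*|z|) t = _
      rw [max_eq_right]
      · ring
      · rcases abs_cases z with ⟨h',_⟩|⟨h',_⟩ <;> rw [h'] <;> linarith
    rw [e, quad_int, max_eq_left (by linarith)]
    ring

lemma inner_x_int (u t : ℝ) (hu0 : 0 ≤ u) (hu2 : u ≤ 2) (ht : 0 ≤ t) :
    ∫ x in (max 0 (u-1))..(min 1 u), max (|u - 2*x|) t
      = (min u (2-u))^2/2 + Pfun u t := by
  set w := min u (2-u) with hw
  have hw0 : 0 ≤ w := le_min hu0 (by linarith)
  have hr : 0 ≤ w/2 := by linarith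
  have ha : max 0 (u-1) = u/2 - w/2 := by
    rcases le_total u 1 with h|h
    · rw [max_eq_left (by linarith), hw, min_eq_left (by linarith)]; ring
    · rw [max_eq_right (by linarith), hw, min_eq_right (by linarith)]; ring
  have hb : min 1 u = u/2 + w/2 := by
    rcases le_total u 1 with h|h
    · rw [min_eq_right h, hw, min_eq_left (by linarith)]; ring
    · rw [min_eq_left h, hw, min_eq_right (by linarith)]; ring
  have e1 : ∫ x in (max 0 (u-1))..(min 1 u), max (|u - 2*x|) t
      = ∫ x in (max 0 (u-1))..(min 1 u), (fun z => max (2*|z|) t) (x - u/2) := by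
    apply integral_congr
    intro x _
    show max (|u - 2*x|) t = max (2*|x - u/2|) t
    congr 1
    rw [abs_sub_comm u (2*x), show (2:ℝ)*|x - u/2| = |2*(x - u/2)| by
      rw [abs_mul]; simp [abs_of_nonneg], show (2:ℝ)*(x-u/2) = 2*x - u by ring]
  rw [e1, integral_comp_sub_right (fun z => max (2*|z|) t) (u/2), ha, hb]
  have : u/2 - w/2 - u/2 = -(w/2) := by ring
  rw [this, show u/2 + w/2 - u/2 = w/2 by ring, symm_int (w/2) t hr ht]
  unfold Pfun
  rw [show 2*(w/2) = w by ring, ← hw]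
  ring

lemma Pfun_comp_cont (f : ℝ → ℝ) (hf : Continuous f) : Continuous fun u => Pfun u (f u) := by
  unfold Pfun; fun_prop

lemma lemC (γ : ℝ) (h0 : 0 ≤ γ) (h2 : γ ≤ 2) :
    ∫ u in (0:ℝ)..γ, Pfun u (γ - u) = γ^3/12 := by
  have hc := Pfun_comp_cont (fun u => γ - u) (by fun_prop)
  rw [← integral_add_adjacent_intervals (a := (0:ℝ)) (b := γ/2) (c := γ)
      (hc.intervalIntegrable _ _) (hc.intervalIntegrable _ _)]
  have e1 : ∫ u in (0:ℝ)..(γ/2), Pfun u (γ - u)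
      = ∫ u in (0:ℝ)..(γ/2), (0 + γ*u + (-3/2)*u^2) := by
    apply integral_congr
    intro u hu
    rw [Set.uIcc_of_le (by linarith)] at hu
    obtain ⟨h1', h2'⟩ := hu
    show Pfun u (γ - u) = _
    unfold Pfun
    rw [min_eq_left (by linarith), max_eq_left (by linarith)]
    ring
  have e2 : ∫ u in (γ/2)..γ, Pfun u (γ - u)
      = ∫ u in (γ/2)..γ, (γ^2/2 + (-γ)*u + (1/2)*u^2) := by
    apply integral_congr
    intro u hu
    rw [Set.uIcc_of_le (by linarith)] at hu
    obtain ⟨h1', h2'⟩ := hu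
    show Pfun u (γ - u) = _
    unfold Pfun
    rw [max_eq_right (by rcases min_cases u (2-u) with ⟨h',_⟩|⟨h',_⟩ <;> rw [h'] <;> linarith)]
    ring
  rw [e1, e2, quad_int, quad_int]
  ring

lemma lemB (γ δ : ℝ) (h0 : 0 ≤ γ) (hγδ : γ ≤ δ) (h2 : δ ≤ 2) :
    ∫ u in ((γ+δ)/2)..δ, Pfun u (δ - u) = (δ-γ)^3/48 := by
  have e1 : ∫ u in ((γ+δ)/2)..δ, Pfun u (δ - u)
      = ∫ u in ((γ+δ)/2)..δ, (δ^2/2 + (-δ)*u + (1/2)*u^2) := by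
    apply integral_congr
    intro u hu
    rw [Set.uIcc_of_le (by linarith)] at hu
    obtain ⟨h1', h2'⟩ := hu
    show Pfun u (δ - u) = _
    unfold Pfun
    rw [max_eq_right (by rcases min_cases u (2-u) with ⟨h',_⟩|⟨h',_⟩ <;> rw [h'] <;> linarith)]
    ring
  rw [e1, quad_int]
  ring

lemma lemA (γ a : ℝ) (h0 : 0 ≤ γ) (hγa : γ ≤ a) (ha : a ≤ 1 + γ/2) (h2 : γ ≤ 2) :
    ∫ u in a..2, Pfun u (u - γ) = (2-γ)^3/12 - (a-γ)^3/6 := by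
  have hc := Pfun_comp_cont (fun u => u - γ) (by fun_prop)
  rw [← integral_add_adjacent_intervals (a := a) (b := 1 + γ/2) (c := 2)
      (hc.intervalIntegrable _ _) (hc.intervalIntegrable _ _)]
  have e1 : ∫ u in a..(1+γ/2), Pfun u (u - γ)
      = ∫ u in a..(1+γ/2), (γ^2/2 + (-γ)*u + (1/2)*u^2) := by
    apply integral_congr
    intro u hu
    rw [Set.uIcc_of_le (by linarith)] at hu
    obtain ⟨h1', h2'⟩ := hu
    show Pfun u (u - γ) = _
    unfold Pfun
    rw [max_eq_right (by rcases min_cases u (2-u) with ⟨h',_⟩|⟨h',_⟩ <;> rw [h'] <;> linarith)]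
    ring
  have e2 : ∫ u in (1+γ/2)..2, Pfun u (u - γ)
      = ∫ u in (1+γ/2)..2, ((-2*γ-2) + (4+γ)*u + (-3/2)*u^2) := by
    apply integral_congr
    intro u hu
    rw [Set.uIcc_of_le (by linarith)] at hu
    obtain ⟨h1', h2'⟩ := hu
    show Pfun u (u - γ) = _
    unfold Pfun
    rw [min_eq_right (by linarith), max_eq_left (by linarith)]
    ring
  rw [e1, e2, quad_int, quad_int]
  ring

lemma abs_near (β δ u : ℝ) (h : β ≤ δ) (hu : (β+δ)/2 ≤ u) : |u - δ| ≤ |u - β| := by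
  rcases abs_cases (u - δ) with ⟨h1,_⟩|⟨h1,_⟩ <;> rcases abs_cases (u - β) with ⟨h2,_⟩|⟨h2,_⟩ <;>
    linarith

lemma abs_far (γ δ u : ℝ) (h : γ ≤ δ) (hu : u ≤ (γ+δ)/2) : |u - γ| ≤ |u - δ| := by
  rcases abs_cases (u - δ) with ⟨h1,_⟩|⟨h1,_⟩ <;> rcases abs_cases (u - γ) with ⟨h2,_⟩|⟨h2,_⟩ <;>
    linarith

lemma icc_ne (m : ℕ) : (Finset.Icc 1 (m+1)).Nonempty :=
  Finset.nonempty_Icc.mpr (by omega)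

lemma main_int (m : ℕ) (q : ℕ → ℝ) (h0 : 0 ≤ q 1) (h1 : q (m+1) ≤ 1)
    (hm : ∀ i j, 1 ≤ i → i ≤ j → j ≤ m+1 → q i ≤ q j) :
    ∫ u in (0:ℝ)..2, Pfun u ((Finset.Icc 1 (m+1)).inf' (icc_ne m) (fun i => |u - 2*q i|))
      = (2/3)*(q 1)^3 + (∑ i ∈ Finset.Icc 1 m, (1/3)*(q (i+1) - q i)^3)
        + (2/3)*(1 - q (m+1))^3 := by
  induction m generalizing q with
  | zero =>
    have e0 : ∀ u : ℝ, (Finset.Icc 1 (0+1)).inf' (icc_ne 0) (fun i => |u - 2*q i|)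
        = |u - 2*q 1| := by
      intro u
      apply le_antisymm
      · exact Finset.inf'_le _ (Finset.mem_Icc.mpr ⟨le_rfl, le_rfl⟩)
      · apply Finset.le_inf'
        intro i hi
        simp only [Finset.mem_Icc] at hi
        have : i = 1 := by omega
        rw [this]
    rw [integral_congr (fun u _ => by
      show Pfun u ((Finset.Icc 1 (0+1)).inf' (icc_ne 0) (fun i => |u - 2*q i|))
        = Pfun u (|u - 2*(q 1)|)
      rw [e0 u])]
    set γ := 2*q 1 with hγ
    have hγ0 : 0 ≤ γ := by rw [hγ]; linarith
    have hγ2 : γ ≤ 2 := by rw [hγ]; linarith [hm 1 1 le_rfl le_rfl le_rfl, h1]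
    have hcont : Continuous fun u : ℝ => Pfun u (|u - γ|) :=
      Pfun_comp_cont _ (by fun_prop)
    rw [← integral_add_adjacent_intervals (a := (0:ℝ)) (b := γ) (c := 2)
        (hcont.intervalIntegrable _ _) (hcont.intervalIntegrable _ _)]
    have e1 : ∫ u in (0:ℝ)..γ, Pfun u (|u - γ|) = ∫ u in (0:ℝ)..γ, Pfun u (γ - u) :=
      integral_congr (fun u hu => by
        rw [Set.uIcc_of_le hγ0] at hu
        rw [abs_sub_comm, abs_of_nonneg (by linarith [hu.2])])
    have e2 : ∫ u in γ..2, Pfun u (|u - γ|) = ∫ u in γ..2, Pfun u (u - γ) :=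
      integral_congr (fun u hu => by
        rw [Set.uIcc_of_le hγ2] at hu
        rw [abs_of_nonneg (by linarith [hu.1])])
    rw [e1, e2, lemC γ hγ0 hγ2, lemA γ γ hγ0 le_rfl (by linarith) hγ2]
    rw [hγ]
    have : (Finset.Icc 1 0 : Finset ℕ) = ∅ := by decide
    rw [this, Finset.sum_empty]
    ring
  | succ m ih =>
    have hq1 : 0 ≤ q (m+1) := le_trans h0 (hm 1 (m+1) le_rfl (by omega) (by omega))
    have hq12 : q (m+1) ≤ q (m+2) := hm (m+1) (m+2) (by omega) (by omega) (by omega)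
    have hq2 : q (m+2) ≤ 1 := h1
    set γ := 2*q (m+1) with hγ
    set δ := 2*q (m+2) with hδ
    set M := (γ+δ)/2 with hM
    have hγ0 : 0 ≤ γ := by rw [hγ]; linarith
    have hγδ : γ ≤ δ := by rw [hγ, hδ]; linarith
    have hδ2 : δ ≤ 2 := by rw [hδ]; linarith
    have hM0 : 0 ≤ M := by rw [hM]; linarith
    have hM2 : M ≤ 2 := by rw [hM]; linarith
    have hMδ : M ≤ δ := by rw [hM]; linarith
    -- D1 and D2
    set D1 : ℝ → ℝ := fun u => (Finset.Icc 1 (m+1)).inf' (icc_ne m) (fun i => |u - 2*q i|)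
      with hD1
    set D2 : ℝ → ℝ := fun u => (Finset.Icc 1 (m+2)).inf' (icc_ne (m+1)) (fun i => |u - 2*q i|)
      with hD2
    have hD1c : Continuous D1 := by
      rw [hD1]
      exact Continuous.finset_inf'_apply _ (fun i _ => by fun_prop)
    have hD2c : Continuous D2 := by
      rw [hD2]
      exact Continuous.finset_inf'_apply _ (fun i _ => by fun_prop)
    have hP1 : Continuous fun u => Pfun u (D1 u) := Pfun_comp_cont D1 hD1c
    have hP2 : Continuous fun u => Pfun u (D2 u) := Pfun_comp_cont D2 hD2c
    -- insert identity
    have hins : ∀ u : ℝ, D2 u = min (|u - δ|) (D1 u) := by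
      intro u
      rw [hD2, hD1]
      apply le_antisymm
      · apply le_min
        · exact le_trans (Finset.inf'_le _ (Finset.mem_Icc.mpr ⟨by omega, le_rfl⟩))
            (le_of_eq (by rw [hδ]))
        · apply Finset.le_inf'
          intro i hi
          simp only [Finset.mem_Icc] at hi
          exact Finset.inf'_le _ (Finset.mem_Icc.mpr ⟨hi.1, by omega⟩)
      · apply Finset.le_inf'
        intro i hi
        simp only [Finset.mem_Icc] at hi
        rcases Nat.lt_or_ge i (m+2) with h'|h'
        · exact le_trans (min_le_right _ _)
            (Finset.inf'_le _ (Finset.mem_Icc.mpr ⟨hi.1, by omega⟩))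
        · have : i = m+2 := by omega
          rw [this, ← hδ]
          exact min_le_left _ _
    -- on [0, M] : D2 = D1
    have e2 : ∫ u in (0:ℝ)..M, Pfun u (D2 u) = ∫ u in (0:ℝ)..M, Pfun u (D1 u) := by
      apply integral_congr
      intro u hu
      rw [Set.uIcc_of_le hM0] at hu
      have hle : D1 u ≤ |u - δ| := by
        calc D1 u ≤ |u - 2*q (m+1)| :=
              Finset.inf'_le _ (Finset.mem_Icc.mpr ⟨by omega, le_rfl⟩)
        _ = |u - γ| := by rw [hγ]
        _ ≤ |u - δ| := abs_far γ δ u hγδ (by linarith [hu.2])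
      show Pfun u (D2 u) = Pfun u (D1 u)
      rw [hins u, min_eq_right hle]
    -- on [M, 2] : D1 = u - γ
    have e4 : ∫ u in M..2, Pfun u (D1 u) = ∫ u in M..2, Pfun u (u - γ) := by
      apply integral_congr
      intro u hu
      rw [Set.uIcc_of_le hM2] at hu
      have huγ : γ ≤ u := by linarith [hu.1]
      have : D1 u = u - γ := by
        apply le_antisymm
        · calc D1 u ≤ |u - 2*q (m+1)| :=
              Finset.inf'_le _ (Finset.mem_Icc.mpr ⟨by omega, le_rfl⟩)
          _ = |u - γ| := by rw [hγ]
          _ = u - γ := abs_of_nonneg (by linarith)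
        · apply Finset.le_inf'
          intro i hi
          simp only [Finset.mem_Icc] at hi
          have : q i ≤ q (m+1) := hm i (m+1) hi.1 hi.2 (by omega)
          calc u - γ ≤ u - 2*q i := by rw [hγ]; linarith
          _ ≤ |u - 2*q i| := le_abs_self _
      show Pfun u (D1 u) = Pfun u (u - γ)
      rw [this]
    -- on [M, 2] : D2 = |u - δ|
    have e5 : ∫ u in M..2, Pfun u (D2 u) = ∫ u in M..2, Pfun u (|u - δ|) := by
      apply integral_congr
      intro u hu
      rw [Set.uIcc_of_le hM2] at hu
      have : D2 u = |u - δ| := by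
        apply le_antisymm
        · calc D2 u ≤ |u - 2*q (m+2)| :=
              Finset.inf'_le _ (Finset.mem_Icc.mpr ⟨by omega, le_rfl⟩)
          _ = |u - δ| := by rw [hδ]
        · apply Finset.le_inf'
          intro i hi
          simp only [Finset.mem_Icc] at hi
          rcases Nat.lt_or_ge i (m+2) with h'|h'
          · have hqi : q i ≤ q (m+1) := hm i (m+1) hi.1 (by omega) (by omega)
            apply abs_near (2*q i) δ u (by rw [hδ]; linarith)
            calc (2*q i + δ)/2 ≤ (γ + δ)/2 := by rw [hγ]; linarith
            _ ≤ u := by rw [← hM]; exact hu.1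
          · have : i = m+2 := by omega
            rw [this, ← hδ]
      show Pfun u (D2 u) = Pfun u (|u - δ|)
      rw [this]
    -- split |u - δ| on [M, δ] and [δ, 2]
    have hcδ : Continuous fun u : ℝ => Pfun u (|u - δ|) := Pfun_comp_cont _ (by fun_prop)
    have e6 : ∫ u in M..2, Pfun u (|u - δ|)
        = (∫ u in M..δ, Pfun u (δ - u)) + ∫ u in δ..2, Pfun u (u - δ) := by
      rw [← integral_add_adjacent_intervals (a := M) (b := δ) (c := 2)
          (hcδ.intervalIntegrable _ _) (hcδ.intervalIntegrable _ _)]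
      congr 1
      · apply integral_congr
        intro u hu
        rw [Set.uIcc_of_le hMδ] at hu
        show Pfun u (|u - δ|) = Pfun u (δ - u)
        rw [abs_sub_comm, abs_of_nonneg (by linarith [hu.2])]
      · apply integral_congr
        intro u hu
        rw [Set.uIcc_of_le hδ2] at hu
        show Pfun u (|u - δ|) = Pfun u (u - δ)
        rw [abs_of_nonneg (by linarith [hu.1])]
    -- assemble
    have split2 : ∫ u in (0:ℝ)..2, Pfun u (D2 u)
        = (∫ u in (0:ℝ)..M, Pfun u (D2 u)) + ∫ u in M..2, Pfun u (D2 u) :=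
      (integral_add_adjacent_intervals (hP2.intervalIntegrable _ _)
        (hP2.intervalIntegrable _ _)).symm
    have split1 : ∫ u in (0:ℝ)..M, Pfun u (D1 u)
        = (∫ u in (0:ℝ)..2, Pfun u (D1 u)) - ∫ u in M..2, Pfun u (D1 u) := by
      have := integral_add_adjacent_intervals (μ := volume) (a := (0:ℝ)) (b := M) (c := 2)
        (hP1.intervalIntegrable _ _) (hP1.intervalIntegrable _ _)
      linarith
    have ihv : ∫ u in (0:ℝ)..2, Pfun u (D1 u)
        = (2/3)*(q 1)^3 + (∑ i ∈ Finset.Icc 1 m, (1/3)*(q (i+1) - q i)^3)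
          + (2/3)*(1 - q (m+1))^3 :=
      ih q h0 (by linarith) (fun i j hi hij hj => hm i j hi hij (by omega))
    have lA1 : ∫ u in M..2, Pfun u (u - γ) = (2-γ)^3/12 - (M-γ)^3/6 :=
      lemA γ M hγ0 (by linarith) (by rw [hM]; linarith) (by linarith)
    have lB1 : ∫ u in M..δ, Pfun u (δ - u) = (δ-γ)^3/48 := by
      rw [hM]; exact lemB γ δ hγ0 hγδ hδ2
    have lA2 : ∫ u in δ..2, Pfun u (u - δ) = (2-δ)^3/12 - (δ-δ)^3/6 :=
      lemA δ δ (by linarith) le_rfl (by linarith) hδ2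
    rw [Finset.sum_Icc_succ_top (by omega)]
    rw [split2, e2, split1, e4, e5, e6, ihv, lA1, lB1, lA2, hM, hγ, hδ]
    ring

lemma fubini_step (g : ℝ → ℝ → ℝ) (hg : Continuous fun z : ℝ × ℝ => g z.1 z.2) :
    ∫ x in (0:ℝ)..1, ∫ u in x..(x+1), g x u
      = ∫ u in (0:ℝ)..2, ∫ x in (max 0 (u-1))..(min 1 u), g x u := by
  set T : Set (ℝ × ℝ) := {z | 0 ≤ z.1 ∧ z.1 ≤ 1 ∧ z.1 ≤ z.2 ∧ z.2 ≤ z.1 + 1} with hT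
  have hTclosed : IsClosed T := by
    apply IsClosed.inter (isClosed_le continuous_const continuous_fst)
    apply IsClosed.inter (isClosed_le continuous_fst continuous_const)
    exact IsClosed.inter (isClosed_le continuous_fst continuous_snd)
      (isClosed_le continuous_snd (by fun_prop))
  have hTmeas : MeasurableSet T := hTclosed.measurableSet
  have hTsub : T ⊆ Set.Icc ((0:ℝ),(0:ℝ)) ((1:ℝ),(2:ℝ)) := by
    rintro ⟨x,u⟩ ⟨h1,h2,h3,h4⟩
    constructor <;> constructor <;> simp_all <;> linarith
  have hTcpt : IsCompact T := isCompact_Icc.of_isClosed_subset hTclosed hTsub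
  set GG : ℝ × ℝ → ℝ := T.indicator (fun z => g z.1 z.2) with hGG
  have hGi : Integrable GG (volume.prod volume) := by
    rw [← MeasureTheory.Measure.volume_eq_prod]
    rw [hGG, MeasureTheory.integrable_indicator_iff hTmeas]
    exact hg.continuousOn.integrableOn_compact hTcpt
  have swap : ∫ x : ℝ, ∫ u : ℝ, GG (x,u) = ∫ u : ℝ, ∫ x : ℝ, GG (x,u) :=
    MeasureTheory.integral_integral_swap (f := fun x u => GG (x,u)) hGi
  -- LHS
  have lhs : ∫ x : ℝ, ∫ u : ℝ, GG (x,u) = ∫ x in (0:ℝ)..1, ∫ u in x..(x+1), g x u := by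
    have h1 : ∀ x : ℝ, (∫ u : ℝ, GG (x,u))
        = (Set.Icc (0:ℝ) 1).indicator (fun x => ∫ u in x..(x+1), g x u) x := by
      intro x
      rcases Classical.em (x ∈ Set.Icc (0:ℝ) 1) with hx|hx
      · rw [Set.indicator_of_mem hx]
        have : (fun u => GG (x,u)) = (Set.Icc x (x+1)).indicator (g x) := by
          funext u
          rw [hGG]
          rcases Classical.em (u ∈ Set.Icc x (x+1)) with hu|hu
          · rw [Set.indicator_of_mem hu]
            rw [Set.indicator_of_mem (by
              simp only [hT, Set.mem_setOf_eq]
              simp only [Set.mem_Icc] at hx hu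
              exact ⟨hx.1, hx.2, hu.1, hu.2⟩)]
          · rw [Set.indicator_of_notMem hu, Set.indicator_of_notMem (by
              simp only [hT, Set.mem_setOf_eq]
              simp only [Set.mem_Icc] at hu
              intro ⟨a1,a2,a3,a4⟩
              exact hu ⟨a3,a4⟩)]
        rw [this, MeasureTheory.integral_indicator measurableSet_Icc,
          MeasureTheory.integral_Icc_eq_integral_Ioc,
          ← intervalIntegral.integral_of_le (by linarith)]
      · rw [Set.indicator_of_notMem hx]
        have : (fun u => GG (x,u)) = (fun _ => (0:ℝ)) := by
          funext u
          rw [hGG, Set.indicator_of_notMem (by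
            simp only [hT, Set.mem_setOf_eq]
            simp only [Set.mem_Icc] at hx
            intro ⟨a1,a2,a3,a4⟩
            exact hx ⟨a1,a2⟩)]
        rw [this, integral_zero]
    simp_rw [h1]
    rw [MeasureTheory.integral_indicator measurableSet_Icc,
      MeasureTheory.integral_Icc_eq_integral_Ioc,
      ← intervalIntegral.integral_of_le (by norm_num : (0:ℝ) ≤ 1)]
  -- RHS
  have rhs : ∫ u : ℝ, ∫ x : ℝ, GG (x,u) = ∫ u in (0:ℝ)..2, ∫ x in (max 0 (u-1))..(min 1 u), g x u := by
    have h2 : ∀ u : ℝ, (fun x => GG (x,u))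
        = (Set.Icc (max 0 (u-1)) (min 1 u)).indicator (fun x => g x u) := by
      intro u
      funext x
      rw [hGG]
      rcases Classical.em (x ∈ Set.Icc (max 0 (u-1)) (min 1 u)) with hx|hx
      · rw [Set.indicator_of_mem hx, Set.indicator_of_mem (by
          simp only [hT, Set.mem_setOf_eq]
          simp only [Set.mem_Icc, max_le_iff, le_min_iff] at hx
          exact ⟨hx.1.1, hx.2.1, hx.2.2, by linarith [hx.1.2]⟩)]
      · rw [Set.indicator_of_notMem hx, Set.indicator_of_notMem (by
          simp only [hT, Set.mem_setOf_eq]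
          simp only [Set.mem_Icc, max_le_iff, le_min_iff] at hx
          intro ⟨a1,a2,a3,a4⟩
          exact hx ⟨⟨a1, by linarith⟩, a2, a3⟩)]
    have h3 : ∀ u : ℝ, (∫ x : ℝ, GG (x,u))
        = (Set.Icc (0:ℝ) 2).indicator
            (fun u => ∫ x in (max 0 (u-1))..(min 1 u), g x u) u := by
      intro u
      rw [h2 u, MeasureTheory.integral_indicator measurableSet_Icc,
        MeasureTheory.integral_Icc_eq_integral_Ioc]
      rcases Classical.em (u ∈ Set.Icc (0:ℝ) 2) with hu|hu
      · rw [Set.indicator_of_mem hu]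
        simp only [Set.mem_Icc] at hu
        rw [← intervalIntegral.integral_of_le (by
          apply max_le (le_min (by norm_num) hu.1) (le_min (by linarith) (by linarith)))]
      · rw [Set.indicator_of_notMem hu]
        simp only [Set.mem_Icc, not_and_or, not_le] at hu
        have hle : min 1 u ≤ max 0 (u-1) := by
          rcases hu with hu|hu
          · exact (min_le_right 1 u).trans ((le_of_lt hu).trans (le_max_left _ _))
          · exact (min_le_left 1 u).trans (le_trans (by linarith) (le_max_right 0 (u-1)))
        rw [Set.Ioc_eq_empty (not_lt.mpr hle)]
        simp
    simp_rw [h3]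
    rw [MeasureTheory.integral_indicator measurableSet_Icc,
      MeasureTheory.integral_Icc_eq_integral_Ioc,
      ← intervalIntegral.integral_of_le (by norm_num : (0:ℝ) ≤ 2)]
  rw [← lhs, swap, rhs]

lemma const_int : ∫ u in (0:ℝ)..2, (min u (2-u))^2/2 = 1/3 := by
  have hc : Continuous fun u : ℝ => (min u (2-u))^2/2 := by fun_prop
  rw [← integral_add_adjacent_intervals (a := (0:ℝ)) (b := 1) (c := 2)
      (hc.intervalIntegrable _ _) (hc.intervalIntegrable _ _)]
  have e1 : ∫ u in (0:ℝ)..1, (min u (2-u))^2/2 = ∫ u in (0:ℝ)..1, (0 + 0*u + (1/2)*u^2) := by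
    apply integral_congr
    intro u hu
    rw [Set.uIcc_of_le (by norm_num)] at hu
    obtain ⟨h1,h2⟩ := hu
    show (min u (2-u))^2/2 = _
    rw [min_eq_left (by linarith)]; ring
  have e2 : ∫ u in (1:ℝ)..2, (min u (2-u))^2/2 = ∫ u in (1:ℝ)..2, (2 + (-2)*u + (1/2)*u^2) := by
    apply integral_congr
    intro u hu
    rw [Set.uIcc_of_le (by norm_num)] at hu
    obtain ⟨h1,h2⟩ := hu
    show (min u (2-u))^2/2 = _
    rw [min_eq_right (by linarith)]; ring
  rw [e1, e2, quad_int, quad_int]; norm_num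

lemma formula (m : ℕ) (q : ℕ → ℝ) (h0 : 0 ≤ q 1) (h1 : q (m+1) ≤ 1)
    (hm : ∀ i j, 1 ≤ i → i ≤ j → j ≤ m+1 → q i ≤ q j) :
    (∫ x in (0:ℝ)..1, ∫ y in (0:ℝ)..1,
        (Finset.Icc 1 (m+1)).inf' (icc_ne m) (fun i => |x - q i| + |y - q i|))
      = 1/3 + (2/3)*(q 1)^3 + (∑ i ∈ Finset.Icc 1 m, (1/3)*(q (i+1) - q i)^3)
        + (2/3)*(1 - q (m+1))^3 := by
  set D : ℝ → ℝ := fun u => (Finset.Icc 1 (m+1)).inf' (icc_ne m) (fun i => |u - 2*q i|)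
    with hD
  have hDc : Continuous D := by
    rw [hD]; exact Continuous.finset_inf'_apply _ (fun i _ => by fun_prop)
  have hD0 : ∀ u, 0 ≤ D u := by
    intro u
    rw [hD]
    exact Finset.le_inf' _ _ (fun i _ => abs_nonneg _)
  have step1 : ∀ x y : ℝ, (Finset.Icc 1 (m+1)).inf' (icc_ne m)
      (fun i => |x - q i| + |y - q i|) = max (|x-y|) (D (x+y)) := by
    intro x y
    rw [hD]
    have : ∀ i ∈ Finset.Icc 1 (m+1), |x - q i| + |y - q i|
        = max (|x-y|) (|x+y-2*q i|) := fun i _ => key_pointwise x y (q i)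
    rw [Finset.inf'_congr (icc_ne m) rfl this, inf'_max_const]
  have step2 : ∀ x : ℝ, ∫ y in (0:ℝ)..1, max (|x-y|) (D (x+y))
      = ∫ u in x..(x+1), max (|u-2*x|) (D u) := by
    intro x
    have e : ∫ y in (0:ℝ)..1, max (|x-y|) (D (x+y))
        = ∫ y in (0:ℝ)..1, (fun u => max (|u-2*x|) (D u)) (x + y) := by
      apply integral_congr
      intro y _
      show max (|x-y|) (D (x+y)) = max (|x+y-2*x|) (D (x+y))
      rw [show x+y-2*x = y-x by ring, abs_sub_comm y x]
    rw [e, intervalIntegral.integral_comp_add_left (fun u => max (|u-2*x|) (D u)) x,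
      add_zero]
  have hgc : Continuous fun z : ℝ × ℝ => max (|z.2 - 2*z.1|) (D z.2) := by
    apply Continuous.max (by fun_prop) (hDc.comp continuous_snd)
  have step4 : ∀ u ∈ Set.uIcc (0:ℝ) 2, ∫ x in (max 0 (u-1))..(min 1 u), max (|u-2*x|) (D u)
      = (min u (2-u))^2/2 + Pfun u (D u) := by
    intro u hu
    rw [Set.uIcc_of_le (by norm_num)] at hu
    exact inner_x_int u (D u) hu.1 hu.2 (hD0 u)
  calc (∫ x in (0:ℝ)..1, ∫ y in (0:ℝ)..1,
        (Finset.Icc 1 (m+1)).inf' (icc_ne m) (fun i => |x - q i| + |y - q i|))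
      = ∫ x in (0:ℝ)..1, ∫ u in x..(x+1), max (|u-2*x|) (D u) := by
        apply integral_congr
        intro x _
        show (∫ y in (0:ℝ)..1, (Finset.Icc 1 (m+1)).inf' (icc_ne m)
          (fun i => |x - q i| + |y - q i|)) = ∫ u in x..(x+1), max (|u-2*x|) (D u)
        rw [← step2 x]
        exact integral_congr (fun y _ => step1 x y)
    _ = ∫ u in (0:ℝ)..2, ∫ x in (max 0 (u-1))..(min 1 u), max (|u-2*x|) (D u) :=
        fubini_step (fun x u => max (|u-2*x|) (D u)) hgc
    _ = ∫ u in (0:ℝ)..2, ((min u (2-u))^2/2 + Pfun u (D u)) := integral_congr step4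
    _ = (∫ u in (0:ℝ)..2, (min u (2-u))^2/2) + ∫ u in (0:ℝ)..2, Pfun u (D u) := by
        apply intervalIntegral.integral_add
        · exact (by fun_prop : Continuous fun u : ℝ => (min u (2-u))^2/2).intervalIntegrable _ _
        · exact (Pfun_comp_cont D hDc).intervalIntegrable _ _
    _ = 1/3 + (2/3)*(q 1)^3 + (∑ i ∈ Finset.Icc 1 m, (1/3)*(q (i+1) - q i)^3)
        + (2/3)*(1 - q (m+1))^3 := by
        rw [const_int, main_int m q h0 h1 hm]
        ring

lemma cube_le (x y a b : ℝ) (hx : 0 ≤ x) (hy : 0 ≤ y) (ha : 0 ≤ a) (hb : 0 ≤ b)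
    (hab : a + b = 1) : (a*x+b*y)^3 ≤ a*x^3 + b*y^3 := by
  have := (convexOn_pow (𝕜 := ℝ) 3).2 (Set.mem_Ici.mpr hx) (Set.mem_Ici.mpr hy) ha hb hab
  simpa [smul_eq_mul] using this

theorem stmt_11 (n : ℕ) (hn : 1 ≤ n) :
    ConvexOn ℝ
      {q : ℕ → ℝ | 0 ≤ q 1 ∧ q n ≤ 1 ∧ ∀ i j, 1 ≤ i → i ≤ j → j ≤ n → q i ≤ q j}
      (fun q => ∫ x in (0:ℝ)..1, ∫ y in (0:ℝ)..1,
        (Finset.Icc 1 n).inf' (Finset.nonempty_Icc.mpr hn)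
          (fun i => |x - q i| + |y - q i|)) := by
  obtain ⟨m, rfl⟩ : ∃ m, n = m + 1 := ⟨n - 1, by omega⟩
  constructor
  · intro p hp q hq a b ha hb hab
    obtain ⟨hp0, hp1, hpm⟩ := hp
    obtain ⟨hq0, hq1, hqm⟩ := hq
    refine ⟨?_, ?_, ?_⟩
    · simp only [Pi.add_apply, Pi.smul_apply, smul_eq_mul]
      positivity
    · simp only [Pi.add_apply, Pi.smul_apply, smul_eq_mul]
      nlinarith
    · intro i j hi hij hj
      simp only [Pi.add_apply, Pi.smul_apply, smul_eq_mul]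
      have := hpm i j hi hij hj
      have := hqm i j hi hij hj
      nlinarith
  · intro p hp q hq a b ha hb hab
    obtain ⟨hp0, hp1, hpm⟩ := hp
    obtain ⟨hq0, hq1, hqm⟩ := hq
    have hz0 : 0 ≤ (a • p + b • q) 1 := by
      simp only [Pi.add_apply, Pi.smul_apply, smul_eq_mul]; positivity
    have hz1 : (a • p + b • q) (m+1) ≤ 1 := by
      simp only [Pi.add_apply, Pi.smul_apply, smul_eq_mul]; nlinarith
    have hzm : ∀ i j, 1 ≤ i → i ≤ j → j ≤ m+1 → (a • p + b • q) i ≤ (a • p + b • q) j := by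
      intro i j hi hij hj
      simp only [Pi.add_apply, Pi.smul_apply, smul_eq_mul]
      have := hpm i j hi hij hj
      have := hqm i j hi hij hj
      nlinarith
    simp only
    rw [formula m p hp0 hp1 hpm, formula m q hq0 hq1 hqm,
        formula m _ hz0 hz1 hzm]
    simp only [Pi.add_apply, Pi.smul_apply, smul_eq_mul]
    have c1 : (a * p 1 + b * q 1)^3 ≤ a * (p 1)^3 + b * (q 1)^3 :=
      cube_le _ _ a b hp0 hq0 ha hb hab
    have c2 : (1 - (a * p (m+1) + b * q (m+1)))^3
        ≤ a * (1 - p (m+1))^3 + b * (1 - q (m+1))^3 := by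
      have := cube_le (1 - p (m+1)) (1 - q (m+1)) a b (by linarith) (by linarith) ha hb hab
      calc (1 - (a * p (m+1) + b * q (m+1)))^3
          = (a * (1 - p (m+1)) + b * (1 - q (m+1)))^3 := by rw [show
            (1:ℝ) - (a * p (m+1) + b * q (m+1)) = a * (1 - p (m+1)) + b * (1 - q (m+1)) by
            nlinarith]
        _ ≤ _ := this
    have c3 : (∑ i ∈ Finset.Icc 1 m,
          (1/3)*((a * p (i+1) + b * q (i+1)) - (a * p i + b * q i))^3)
        ≤ a * (∑ i ∈ Finset.Icc 1 m, (1/3)*(p (i+1) - p i)^3)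
          + b * (∑ i ∈ Finset.Icc 1 m, (1/3)*(q (i+1) - q i)^3) := by
      rw [Finset.mul_sum, Finset.mul_sum, ← Finset.sum_add_distrib]
      apply Finset.sum_le_sum
      intro i hi
      simp only [Finset.mem_Icc] at hi
      have hpd : 0 ≤ p (i+1) - p i := by
        have := hpm i (i+1) hi.1 (by omega) (by omega); linarith
      have hqd : 0 ≤ q (i+1) - q i := by
        have := hqm i (i+1) hi.1 (by omega) (by omega); linarith
      have := cube_le (p (i+1) - p i) (q (i+1) - q i) a b hpd hqd ha hb hab
      calc (1/3)*((a * p (i+1) + b * q (i+1)) - (a * p i + b * q i))^3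
          = (1/3)*(a * (p (i+1) - p i) + b * (q (i+1) - q i))^3 := by ring_nf
        _ ≤ (1/3)*(a * (p (i+1) - p i)^3 + b * (q (i+1) - q i)^3) := by linarith
        _ = a * ((1/3)*(p (i+1) - p i)^3) + b * ((1/3)*(q (i+1) - q i)^3) := by ring
    have hab' : a + b = 1 := hab
    nlinarith [c1, c2, c3]
end

section
/- Let 0 ≤ p₁₁ ≤ p₂₁ ≤ 1 and 0 ≤ c ≤ 1, and place two hubs at 𝐩₁ = (p₁₁, c) and 𝐩₂ = (p₂₁, c) in the unit square. Then ∫₀¹ ∫₀¹ ∫₀¹ ∫₀¹ min{ |x₁ − p₁₁| + |x₂ − c| + |y₁ − p₁₁| + |y₂ − c| , |x₁ − p₂₁| + |x₂ − c| + |y₁ − p₂₁| + |y₂ − c| } dy₁ dy₂ dx₁ dx₂ = 2 + p₁₁² p₂₁ − p₁₁ p₂₁² + (1/3)p₁₁³ − (1/3)p₂₁³ − 2p₂₁ + 2p₂₁² + 2c² − 2c. -/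
open intervalIntegral

lemma int_poly2 (u v p q r : ℝ) :
    ∫ x in u..v, (p + q*x + r*x^2) = p*(v-u) + q*(v^2-u^2)/2 + r*(v^3-u^3)/3 := by
  have h1 : IntervalIntegrable (fun x : ℝ => p + q*x) MeasureTheory.volume u v := by
    apply Continuous.intervalIntegrable; fun_prop
  have h2 : IntervalIntegrable (fun x : ℝ => r*x^2) MeasureTheory.volume u v := by
    apply Continuous.intervalIntegrable; fun_prop
  rw [intervalIntegral.integral_add h1 h2,
      intervalIntegral.integral_add (by apply Continuous.intervalIntegrable; fun_prop)
        (by apply Continuous.intervalIntegrable; fun_prop),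
      intervalIntegral.integral_const, integral_const_mul, integral_const_mul,
      integral_id, integral_pow]
  simp only [smul_eq_mul]
  ring

lemma int_eq_poly (u v : ℝ) (f : ℝ → ℝ) (p q r : ℝ)
    (h : ∀ x ∈ Set.uIcc u v, f x = p + q*x + r*x^2) :
    ∫ x in u..v, f x = p*(v-u) + q*(v^2-u^2)/2 + r*(v^3-u^3)/3 := by
  rw [intervalIntegral.integral_congr h]
  exact int_poly2 u v p q r

lemma inner_int_s18 (a b A B m : ℝ) (h0a : 0 ≤ a) (ham : a ≤ m) (hmb : m ≤ b) (hb1 : b ≤ 1)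
    (hm : B - A = 2*m - a - b) :
    ∫ y in (0:ℝ)..1, min (A + |y - a|) (B + |y - b|)
      = A*m + a^2/2 + (m-a)^2/2 + B*(1-m) + (b-m)^2/2 + (1-b)^2/2 := by
  have hint : ∀ u v : ℝ,
      IntervalIntegrable (fun y => min (A + |y - a|) (B + |y - b|)) MeasureTheory.volume u v := by
    intro u v; apply Continuous.intervalIntegrable; fun_prop
  rw [← intervalIntegral.integral_add_adjacent_intervals (hint 0 a) (hint a 1),
      ← intervalIntegral.integral_add_adjacent_intervals (hint a m) (hint m 1),
      ← intervalIntegral.integral_add_adjacent_intervals (hint m b) (hint b 1)]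
  rw [int_eq_poly 0 a _ (A + a) (-1) 0 ?_, int_eq_poly a m _ (A - a) 1 0 ?_,
      int_eq_poly m b _ (B + b) (-1) 0 ?_, int_eq_poly b 1 _ (B - b) 1 0 ?_]
  · ring
  · intro y hy
    rw [Set.uIcc_of_le hb1] at hy
    have h1 : |y - a| = y - a := abs_of_nonneg (by linarith [hy.1])
    have h2 : |y - b| = y - b := abs_of_nonneg (by linarith [hy.1])
    rw [min_eq_right (by rw [h1, h2]; linarith), h2]
    ring
  · intro y hy
    rw [Set.uIcc_of_le hmb] at hy
    have h1 : |y - a| = y - a := abs_of_nonneg (by linarith [hy.1])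
    have h2 : |y - b| = -(y - b) := abs_of_nonpos (by linarith [hy.2])
    rw [min_eq_right (by rw [h1, h2]; linarith [hy.1]), h2]
    ring
  · intro y hy
    rw [Set.uIcc_of_le ham] at hy
    have h1 : |y - a| = y - a := abs_of_nonneg (by linarith [hy.1])
    have h2 : |y - b| = -(y - b) := abs_of_nonpos (by linarith [hy.2])
    rw [min_eq_left (by rw [h1, h2]; linarith [hy.2]), h1]
    ring
  · intro y hy
    rw [Set.uIcc_of_le h0a] at hy
    have h1 : |y - a| = -(y - a) := abs_of_nonpos (by linarith [hy.2])
    have h2 : |y - b| = -(y - b) := abs_of_nonpos (by linarith [hy.2])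
    rw [min_eq_left (by rw [h1, h2]; linarith [hy.2]), h1]
    ring

noncomputable def mfun (a b x : ℝ) : ℝ := (a + b + |x - b| - |x - a|) / 2

noncomputable def Gfun (a b x : ℝ) : ℝ :=
  |x - a| * mfun a b x + a^2/2 + (mfun a b x - a)^2/2
    + |x - b| * (1 - mfun a b x) + (b - mfun a b x)^2/2 + (1 - b)^2/2

lemma Gfun_cont (a b : ℝ) : Continuous (Gfun a b) := by
  unfold Gfun mfun; fun_prop

lemma Gfun_eq (a b : ℝ) (h0 : 0 ≤ a) (hab : a ≤ b) (hb : b ≤ 1) (x : ℝ) :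
    (∫ y in (0:ℝ)..1, min (|x - a| + |y - a|) (|x - b| + |y - b|)) = Gfun a b x := by
  have t1 : |x - a| - |x - b| ≤ b - a := by
    have := abs_sub_abs_le_abs_sub (x - a) (x - b)
    have : |x - a - (x - b)| = b - a := by
      rw [show x - a - (x - b) = -(a - b) by ring, abs_neg, abs_of_nonpos (by linarith)]; ring
    linarith [abs_sub_abs_le_abs_sub (x - a) (x - b), this]
  have t2 : |x - b| - |x - a| ≤ b - a := by
    have h := abs_sub_abs_le_abs_sub (x - b) (x - a)
    have : |x - b - (x - a)| = b - a := by
      rw [show x - b - (x - a) = -(b - a) by ring, abs_neg, abs_of_nonneg (by linarith)]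
    linarith
  exact inner_int_s18 a b (|x - a|) (|x - b|) (mfun a b x) h0
    (by unfold mfun; linarith) (by unfold mfun; linarith) hb (by unfold mfun; ring)

lemma Gfun_int (a b : ℝ) (h0 : 0 ≤ a) (hab : a ≤ b) (hb : b ≤ 1) :
    ∫ x in (0:ℝ)..1, Gfun a b x
      = 1 + a^2*b - a*b^2 + a^3/3 - b^3/3 - 2*b + 2*b^2 := by
  have hint : ∀ u v : ℝ, IntervalIntegrable (Gfun a b) MeasureTheory.volume u v :=
    fun u v => (Gfun_cont a b).intervalIntegrable u v
  rw [← intervalIntegral.integral_add_adjacent_intervals (hint 0 a) (hint a 1),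
      ← intervalIntegral.integral_add_adjacent_intervals (hint a b) (hint b 1)]
  rw [int_eq_poly 0 a _ (a*b + a^2/2 + (b-a)^2/2 + b*(1-b) + (1-b)^2/2) (-1) 0 ?_,
      int_eq_poly a b _ (-2*a*b + 1/2) (2*a + 2*b - 1) (-1) ?_,
      int_eq_poly b 1 _ (-a^2 - b*(1-a) + a^2/2 + (b-a)^2/2 + (1-b)^2/2) 1 0 ?_]
  · ring
  · intro x hx
    rw [Set.uIcc_of_le hb] at hx
    have h1 : |x - a| = x - a := abs_of_nonneg (by linarith [hx.1])
    have h2 : |x - b| = x - b := abs_of_nonneg (by linarith [hx.1])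
    unfold Gfun mfun
    rw [h1, h2]; ring
  · intro x hx
    rw [Set.uIcc_of_le hab] at hx
    have h1 : |x - a| = x - a := abs_of_nonneg (by linarith [hx.1])
    have h2 : |x - b| = -(x - b) := abs_of_nonpos (by linarith [hx.2])
    unfold Gfun mfun
    rw [h1, h2]; ring
  · intro x hx
    rw [Set.uIcc_of_le h0] at hx
    have h1 : |x - a| = -(x - a) := abs_of_nonpos (by linarith [hx.2])
    have h2 : |x - b| = -(x - b) := abs_of_nonpos (by linarith [hx.2])
    unfold Gfun mfun
    rw [h1, h2]; ring

lemma abs_int (c K : ℝ) (h0 : 0 ≤ c) (h1 : c ≤ 1) :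
    ∫ y in (0:ℝ)..1, (K + |y - c|) = K + (c^2 - c + 1/2) := by
  have hint : ∀ u v : ℝ,
      IntervalIntegrable (fun y : ℝ => K + |y - c|) MeasureTheory.volume u v := by
    intro u v; apply Continuous.intervalIntegrable; fun_prop
  rw [← intervalIntegral.integral_add_adjacent_intervals (hint 0 c) (hint c 1)]
  rw [int_eq_poly 0 c _ (K + c) (-1) 0 ?_, int_eq_poly c 1 _ (K - c) 1 0 ?_]
  · ring
  · intro y hy
    rw [Set.uIcc_of_le h1] at hy
    rw [abs_of_nonneg (by linarith [hy.1] : (0:ℝ) ≤ y - c)]; ring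
  · intro y hy
    rw [Set.uIcc_of_le h0] at hy
    rw [abs_of_nonpos (by linarith [hy.2] : y - c ≤ 0)]; ring

theorem stmt_18 (p₁₁ p₂₁ c : ℝ) (h0 : 0 ≤ p₁₁) (h1 : p₁₁ ≤ p₂₁) (h2 : p₂₁ ≤ 1)
    (hc0 : 0 ≤ c) (hc1 : c ≤ 1) :
    (∫ x₂ in (0:ℝ)..1, ∫ x₁ in (0:ℝ)..1, ∫ y₂ in (0:ℝ)..1, ∫ y₁ in (0:ℝ)..1,
        min (|x₁ - p₁₁| + |x₂ - c| + |y₁ - p₁₁| + |y₂ - c|)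
            (|x₁ - p₂₁| + |x₂ - c| + |y₁ - p₂₁| + |y₂ - c|))
      = 2 + p₁₁ ^ 2 * p₂₁ - p₁₁ * p₂₁ ^ 2 + (1/3) * p₁₁ ^ 3 - (1/3) * p₂₁ ^ 3
        - 2 * p₂₁ + 2 * p₂₁ ^ 2 + 2 * c ^ 2 - 2 * c := by
  set a := p₁₁ with ha
  set b := p₂₁ with hb
  have step1 : ∀ x₂ x₁ y₂ : ℝ,
      (∫ y₁ in (0:ℝ)..1,
        min (|x₁ - a| + |x₂ - c| + |y₁ - a| + |y₂ - c|)
            (|x₁ - b| + |x₂ - c| + |y₁ - b| + |y₂ - c|))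
      = (Gfun a b x₁ + |x₂ - c|) + |y₂ - c| := by
    intro x₂ x₁ y₂
    have e : ∀ y₁ : ℝ,
        min (|x₁ - a| + |x₂ - c| + |y₁ - a| + |y₂ - c|)
            (|x₁ - b| + |x₂ - c| + |y₁ - b| + |y₂ - c|)
        = min (|x₁ - a| + |y₁ - a|) (|x₁ - b| + |y₁ - b|) + (|x₂ - c| + |y₂ - c|) := by
      intro y₁
      rw [← min_add_add_right]
      congr 1 <;> ring
    rw [intervalIntegral.integral_congr (g := fun y₁ =>
        min (|x₁ - a| + |y₁ - a|) (|x₁ - b| + |y₁ - b|) + (|x₂ - c| + |y₂ - c|))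
        (fun y _ => e y)]
    rw [intervalIntegral.integral_add (by apply Continuous.intervalIntegrable; fun_prop)
        intervalIntegrable_const, intervalIntegral.integral_const, Gfun_eq a b h0 h1 h2 x₁]
    simp only [smul_eq_mul]
    ring
  have step2 : ∀ x₂ x₁ : ℝ,
      (∫ y₂ in (0:ℝ)..1, ((Gfun a b x₁ + |x₂ - c|) + |y₂ - c|))
      = (Gfun a b x₁ + |x₂ - c|) + (c^2 - c + 1/2) :=
    fun x₂ x₁ => abs_int c _ hc0 hc1
  have step3 : ∀ x₂ : ℝ,
      (∫ x₁ in (0:ℝ)..1, ((Gfun a b x₁ + |x₂ - c|) + (c^2 - c + 1/2)))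
      = ((1 + a^2*b - a*b^2 + a^3/3 - b^3/3 - 2*b + 2*b^2) + (c^2 - c + 1/2)) + |x₂ - c| := by
    intro x₂
    have e : (fun x₁ => (Gfun a b x₁ + |x₂ - c|) + (c^2 - c + 1/2))
        = fun x₁ => Gfun a b x₁ + (|x₂ - c| + (c^2 - c + 1/2)) := by
      funext x₁; ring
    rw [intervalIntegral.integral_congr (g := fun x₁ =>
        Gfun a b x₁ + (|x₂ - c| + (c^2 - c + 1/2))) (fun x _ => by simp only; ring)]
    rw [intervalIntegral.integral_add ((Gfun_cont a b).intervalIntegrable 0 1)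
        intervalIntegrable_const, intervalIntegral.integral_const, Gfun_int a b h0 h1 h2]
    simp only [smul_eq_mul]
    ring
  simp only [step1, step2, step3]
  rw [abs_int c _ hc0 hc1]
  ring
end
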